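/- arXiv:2305.14632 — 9 statements merged into one kernel-verified Lean document; each statement's English description precedes it below -/
import Mathlib

section
/- Fix tuples π^{(1)},…,π^{(m)} of linear orders on {0,1} with sign vectors τ^{(1)},…,τ^{(m)} ∈ {±1}^n. The Minkowski sum L_{π^{(1)}} + ⋯ + L_{π^{(m)}} of the supermodular cones equals the set of all f : {0,1}^n → ℝ such that for every pair i ≠ j for which the product τ^{(k)}_i τ^{(k)}_j takes the same value ε ∈ {±1} for all k = 1,…,m, one has ε · A^{(ij)} f ≥ 0 (and no condition is imposed for pairs where the products differ); that is, the facet inequalities of the sum are exactly the facet-defining inequalities common to all m cones. -/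
/-!
Statement 0: A function f : {0,1}^n → ℝ (identified with a function on subsets of [n])
is π-supermodular iff for all i ≠ j the signed elementary imset inequalities
τ_i τ_j A^{(ij)} f ≥ 0 hold.

We encode a tuple π of linear orders on {0,1} by its sign vector
τ : Fin n → Bool, where `true` means the standard order 0 < 1 (sign +1)
and `false` means the reversed order 1 < 0 (sign −1).
-/

/-- Componentwise meet of two subsets (as indicator vectors) w.r.t. the
product order with sign vector `τ`. -/
def piMeet {n : ℕ} (τ : Fin n → Bool) (S T : Finset (Fin n)) : Finset (Fin n) :=
  Finset.univ.filter fun i => if τ i then i ∈ S ∧ i ∈ T else i ∈ S ∨ i ∈ T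

/-- Componentwise join of two subsets (as indicator vectors) w.r.t. the
product order with sign vector `τ`. -/
def piJoin {n : ℕ} (τ : Fin n → Bool) (S T : Finset (Fin n)) : Finset (Fin n) :=
  Finset.univ.filter fun i => if τ i then i ∈ S ∨ i ∈ T else i ∈ S ∧ i ∈ T

/-- `f` is supermodular w.r.t. the product order with sign vector `τ`. -/
def IsPiSupermodular {n : ℕ} (τ : Fin n → Bool) (f : Finset (Fin n) → ℝ) : Prop :=
  ∀ S T : Finset (Fin n), f S + f T ≤ f (piMeet τ S T) + f (piJoin τ S T)

/-- The sign τ_i ∈ {±1} of the i-th linear order, as a real number. -/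
noncomputable def signR {n : ℕ} (τ : Fin n → Bool) (i : Fin n) : ℝ :=
  if τ i then 1 else -1

/-- The elementary imset expression: the row of `A^{(ij)} f` corresponding to
`z ⊆ [n] ∖ {i,j}`, namely `f(z) + f(z ∪ {i,j}) − f(z ∪ {i}) − f(z ∪ {j})`. -/
def imsetExpr {n : ℕ} (f : Finset (Fin n) → ℝ) (i j : Fin n) (z : Finset (Fin n)) : ℝ :=
  f z + f (insert i (insert j z)) - f (insert i z) - f (insert j z)

/-!
Statement 1: the Minkowski sum of supermodular cones `L_{π^{(1)}} + ⋯ + L_{π^{(m)}}`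
consists exactly of the functions satisfying, for every pair i ≠ j such that the
product τ^{(k)}_i τ^{(k)}_j has a common value ε for all k, the inequalities
ε · A^{(ij)} f ≥ 0 (no condition for the other pairs).
-/
namespace Aux

variable {n : ℕ}

/-- conjugation by the sign vector -/
def conjS (τ : Fin n → Bool) (S : Finset (Fin n)) : Finset (Fin n) :=
  Finset.univ.filter fun i => if τ i then i ∈ S else i ∉ S

lemma mem_conjS {τ : Fin n → Bool} {S : Finset (Fin n)} {i : Fin n} :
    i ∈ conjS τ S ↔ (if τ i then i ∈ S else i ∉ S) := by
  simp [conjS]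

lemma conjS_conjS (τ : Fin n → Bool) (S : Finset (Fin n)) : conjS τ (conjS τ S) = S := by
  ext i
  cases h : τ i <;> simp [mem_conjS, h]

lemma piMeet_conjS (τ : Fin n → Bool) (S T : Finset (Fin n)) :
    piMeet τ (conjS τ S) (conjS τ T) = conjS τ (S ∩ T) := by
  ext i
  cases h : τ i <;> simp [piMeet, mem_conjS, h] <;> tauto

lemma piJoin_conjS (τ : Fin n → Bool) (S T : Finset (Fin n)) :
    piJoin τ (conjS τ S) (conjS τ T) = conjS τ (S ∪ T) := by
  ext i
  cases h : τ i <;> simp [piJoin, mem_conjS, h] <;> tauto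

/-- standard supermodularity -/
def Std (f : Finset (Fin n) → ℝ) : Prop :=
  ∀ S T : Finset (Fin n), f S + f T ≤ f (S ∩ T) + f (S ∪ T)

lemma imset_nonneg_of_std {f : Finset (Fin n) → ℝ} (h : Std f) {i j : Fin n} (hij : i ≠ j)
    {z : Finset (Fin n)} (hi : i ∉ z) (hj : j ∉ z) : 0 ≤ imsetExpr f i j z := by
  have h1 : insert i z ∩ insert j z = z := by
    ext l
    simp only [Finset.mem_inter, Finset.mem_insert]
    constructor
    · rintro ⟨hl1 | hl1, hl2 | hl2⟩ <;> first | assumption | (subst hl1; subst hl2; exact absurd rfl hij) | (subst hl1; exact absurd hl2 (by simpa using hij)) | (subst hl2; assumption)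
    · intro hl; exact ⟨Or.inr hl, Or.inr hl⟩
  have h2 : insert i z ∪ insert j z = insert i (insert j z) := by
    ext l; simp [Finset.mem_insert, Finset.mem_union]; tauto
  have := h (insert i z) (insert j z)
  rw [h1, h2] at this
  simp only [imsetExpr]
  linarith

lemma diff_mono {f : Finset (Fin n) → ℝ}
    (hf : ∀ i j : Fin n, i ≠ j → ∀ z, i ∉ z → j ∉ z → 0 ≤ imsetExpr f i j z)
    (i : Fin n) : ∀ B A : Finset (Fin n), A ⊆ B → i ∉ B →
    f (insert i A) - f A ≤ f (insert i B) - f B := by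
  intro B
  induction B using Finset.strongInduction with
  | _ B ih =>
    intro A hAB hiB
    by_cases h : B ⊆ A
    · have : A = B := Finset.Subset.antisymm hAB h
      subst this; exact le_rfl
    · obtain ⟨j, hjB, hjA⟩ := Finset.not_subset.mp h
      have hij : i ≠ j := by rintro rfl; exact hiB hjB
      have hAB' : A ⊆ B.erase j := Finset.subset_erase.mpr ⟨hAB, hjA⟩
      have hiB' : i ∉ B.erase j := fun hmem => hiB (Finset.mem_of_mem_erase hmem)
      have h1 := ih (B.erase j) (Finset.erase_ssubset hjB) A hAB' hiB'
      have h2 := hf i j hij (B.erase j) hiB' (Finset.notMem_erase j B)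
      rw [imsetExpr, Finset.insert_erase hjB] at h2
      linarith

lemma std_of_imset {f : Finset (Fin n) → ℝ}
    (hf : ∀ i j : Fin n, i ≠ j → ∀ z, i ∉ z → j ∉ z → 0 ≤ imsetExpr f i j z) :
    Std f := by
  suffices H : ∀ N : ℕ, ∀ S T : Finset (Fin n), (S \ T).card ≤ N →
      f S + f T ≤ f (S ∩ T) + f (S ∪ T) by
    intro S T; exact H (S \ T).card S T le_rfl
  intro N
  induction N with
  | zero =>
    intro S T h
    have hsub : S ⊆ T := by
      rw [← Finset.sdiff_eq_empty_iff_subset]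
      exact Finset.card_eq_zero.mp (Nat.le_zero.mp h)
    rw [Finset.inter_eq_left.mpr hsub, Finset.union_eq_right.mpr hsub]
  | succ N ih =>
    intro S T h
    by_cases hST : S ⊆ T
    · rw [Finset.inter_eq_left.mpr hST, Finset.union_eq_right.mpr hST]
    · obtain ⟨i, hiS, hiT⟩ := Finset.not_subset.mp hST
      have hiSd : i ∈ S \ T := Finset.mem_sdiff.mpr ⟨hiS, hiT⟩
      have hcard : ((S.erase i) \ T).card ≤ N := by
        rw [Finset.erase_sdiff_comm, Finset.card_erase_of_mem hiSd]
        omega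
      have hIH := ih (S.erase i) T hcard
      have hiU : i ∉ S.erase i ∪ T := by
        simp [Finset.mem_union, hiT]
      have hd := diff_mono hf i (S.erase i ∪ T) (S.erase i) Finset.subset_union_left hiU
      have e1 : insert i (S.erase i) = S := Finset.insert_erase hiS
      have e2 : insert i (S.erase i ∪ T) = S ∪ T := by
        rw [← Finset.insert_union, e1]
      have e3 : S.erase i ∩ T = S ∩ T := by
        ext l
        simp only [Finset.mem_inter, Finset.mem_erase]
        constructor
        · rintro ⟨⟨_, hl⟩, hl2⟩; exact ⟨hl, hl2⟩
        · rintro ⟨hl, hl2⟩; exact ⟨⟨fun hli => hiT (hli ▸ hl2), hl⟩, hl2⟩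
      rw [e1, e2] at hd
      rw [e3] at hIH
      linarith

lemma conjS_insert_true {τ : Fin n → Bool} {i : Fin n} (h : τ i = true) (S : Finset (Fin n)) :
    conjS τ (insert i S) = insert i (conjS τ S) := by
  ext l
  by_cases hl : l = i
  · subst hl; simp [mem_conjS, h]
  · simp [mem_conjS, Finset.mem_insert, hl]

lemma conjS_insert_false {τ : Fin n → Bool} {i : Fin n} (h : τ i = false) (S : Finset (Fin n)) :
    conjS τ (insert i S) = (conjS τ S).erase i := by
  ext l
  by_cases hl : l = i
  · subst hl; simp [mem_conjS, h]
  · simp [mem_conjS, Finset.mem_insert, Finset.mem_erase, hl]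

lemma not_mem_conjS_true {τ : Fin n → Bool} {i : Fin n} {S : Finset (Fin n)}
    (h : τ i = true) (hi : i ∉ S) : i ∉ conjS τ S := by
  simp [mem_conjS, h, hi]

lemma mem_conjS_false {τ : Fin n → Bool} {i : Fin n} {S : Finset (Fin n)}
    (h : τ i = false) (hi : i ∉ S) : i ∈ conjS τ S := by
  simp [mem_conjS, h, hi]

lemma imset_conjS (τ : Fin n → Bool) (g : Finset (Fin n) → ℝ) {i j : Fin n} (hij : i ≠ j)
    {z : Finset (Fin n)} (hi : i ∉ z) (hj : j ∉ z) :
    imsetExpr (fun S => g (conjS τ S)) i j z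
      = signR τ i * signR τ j * imsetExpr g i j (((conjS τ z).erase i).erase j) := by
  have hji : j ≠ i := hij.symm
  have hiz : i ∉ insert j z := by simp [hij, hi]
  have hjz : j ∉ insert i z := by simp [hji, hj]
  set c := conjS τ z with hc
  cases hti : τ i <;> cases htj : τ j
  · -- both false
    have hic : i ∈ c := mem_conjS_false hti hi
    have hjc : j ∈ c := mem_conjS_false htj hj
    set w := (c.erase i).erase j with hw
    have hjci : j ∈ c.erase i := Finset.mem_erase.mpr ⟨hji, hjc⟩
    have e0 : c = insert i (insert j w) := by
      rw [hw, Finset.insert_erase hjci, Finset.insert_erase hic]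
    have e1 : conjS τ (insert i z) = insert j w := by
      rw [conjS_insert_false hti, ← hc, hw, Finset.insert_erase hjci]
    have e2 : conjS τ (insert j z) = insert i w := by
      rw [conjS_insert_false htj, ← hc, hw, Finset.erase_right_comm,
        Finset.insert_erase (Finset.mem_erase.mpr ⟨hij, hic⟩)]
    have e3 : conjS τ (insert i (insert j z)) = w := by
      rw [conjS_insert_false hti, conjS_insert_false htj, ← hc, hw, Finset.erase_right_comm]
    simp only [imsetExpr, ← hc, e0, e1, e2, e3, signR, hti, htj]
    norm_num
    try ring
  · -- τ i false, τ j true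
    have hic : i ∈ c := mem_conjS_false hti hi
    have hjc : j ∉ c := not_mem_conjS_true htj hj
    set w := (c.erase i).erase j with hw
    have hw' : w = c.erase i := by
      rw [hw, Finset.erase_eq_of_notMem (fun hmem => hjc (Finset.mem_of_mem_erase hmem))]
    have e0 : c = insert i w := by rw [hw', Finset.insert_erase hic]
    have e1 : conjS τ (insert i z) = w := by rw [conjS_insert_false hti, ← hc, hw']
    have e2 : conjS τ (insert j z) = insert j (insert i w) := by
      rw [conjS_insert_true htj, ← hc, e0]
    have e3 : conjS τ (insert i (insert j z)) = insert j w := by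
      rw [conjS_insert_false hti, conjS_insert_true htj, ← hc,
        Finset.erase_insert_of_ne hji, ← hw']
    simp only [imsetExpr, ← hc, e0, e1, e2, e3, signR, hti, htj]
    rw [Finset.insert_comm]
    norm_num
    try ring
  · -- τ i true, τ j false
    have hic : i ∉ c := not_mem_conjS_true hti hi
    have hjc : j ∈ c := mem_conjS_false htj hj
    set w := (c.erase i).erase j with hw
    have hci : c.erase i = c := Finset.erase_eq_of_notMem hic
    have hw' : w = c.erase j := by rw [hw, hci]
    have e0 : c = insert j w := by rw [hw', Finset.insert_erase hjc]
    have e1 : conjS τ (insert i z) = insert i (insert j w) := by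
      rw [conjS_insert_true hti, ← hc, e0]
    have e2 : conjS τ (insert j z) = w := by rw [conjS_insert_false htj, ← hc, hw']
    have e3 : conjS τ (insert i (insert j z)) = insert i w := by
      rw [conjS_insert_true hti, conjS_insert_false htj, ← hc, hw']
    simp only [imsetExpr, ← hc, e0, e1, e2, e3, signR, hti, htj]
    norm_num
    try ring
  · -- both true
    have hic : i ∉ c := not_mem_conjS_true hti hi
    have hjc : j ∉ c := not_mem_conjS_true htj hj
    set w := (c.erase i).erase j with hw
    have e0 : c = w := by
      rw [hw, Finset.erase_eq_of_notMem hic, Finset.erase_eq_of_notMem hjc]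
    have e1 : conjS τ (insert i z) = insert i w := by rw [conjS_insert_true hti, ← hc, e0]
    have e2 : conjS τ (insert j z) = insert j w := by rw [conjS_insert_true htj, ← hc, e0]
    have e3 : conjS τ (insert i (insert j z)) = insert i (insert j w) := by
      rw [conjS_insert_true hti, conjS_insert_true htj, ← hc, e0]
    simp only [imsetExpr, ← hc, e0, e1, e2, e3, signR, hti, htj]
    norm_num
    try ring

lemma piSupermodular_iff (τ : Fin n → Bool) (f : Finset (Fin n) → ℝ) :
    IsPiSupermodular τ f ↔ ∀ i j : Fin n, i ≠ j → ∀ z : Finset (Fin n), i ∉ z → j ∉ z →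
      0 ≤ signR τ i * signR τ j * imsetExpr f i j z := by
  have hsq : ∀ i : Fin n, signR τ i * signR τ i = 1 := by
    intro i; by_cases h : τ i <;> simp [signR, h]
  constructor
  · intro h i j hij z hi hj
    -- F := f ∘ conjS τ is Std supermodular
    have hF : Std (fun S => f (conjS τ S)) := by
      intro S T
      have := h (conjS τ S) (conjS τ T)
      rwa [piMeet_conjS, piJoin_conjS] at this
    have hw1 : i ∉ ((conjS τ z).erase i).erase j := fun hmem =>
      (Finset.notMem_erase i _) (Finset.mem_of_mem_erase hmem)
    have hw2 : j ∉ ((conjS τ z).erase i).erase j := Finset.notMem_erase j _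
    have himF : 0 ≤ imsetExpr (fun S => f (conjS τ S)) i j (((conjS τ z).erase i).erase j) :=
      imset_nonneg_of_std hF hij hw1 hw2
    have heq : (fun S => f (conjS τ S)) = fun S => (fun S' => f (conjS τ S')) (conjS τ (conjS τ S)) := by
      funext S; rw [conjS_conjS]
    have key := imset_conjS τ (fun S => f (conjS τ S)) hij hi hj
    -- imsetExpr f i j z = s * imsetExpr F i j w
    have hf_eq : imsetExpr f i j z
        = signR τ i * signR τ j * imsetExpr (fun S => f (conjS τ S)) i j (((conjS τ z).erase i).erase j) := by
      have : imsetExpr (fun S => (fun S' => f (conjS τ S')) (conjS τ S)) i j z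
          = signR τ i * signR τ j * imsetExpr (fun S => f (conjS τ S)) i j (((conjS τ z).erase i).erase j) :=
        imset_conjS τ (fun S' => f (conjS τ S')) hij hi hj
      simpa [conjS_conjS] using this
    rw [hf_eq]
    calc (0:ℝ) ≤ imsetExpr (fun S => f (conjS τ S)) i j (((conjS τ z).erase i).erase j) := himF
    _ = signR τ i * signR τ j * (signR τ i * signR τ j *
          imsetExpr (fun S => f (conjS τ S)) i j (((conjS τ z).erase i).erase j)) := by
        rw [show ∀ a b x : ℝ, a * (b * x) = (a * b) * x by intros; ring,
          show signR τ i * signR τ j * (signR τ i * signR τ j) = 1 by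
            rw [show signR τ i * signR τ j * (signR τ i * signR τ j)
                = (signR τ i * signR τ i) * (signR τ j * signR τ j) by ring, hsq, hsq, one_mul],
          one_mul]
  · intro h
    have hF : Std (fun S => f (conjS τ S)) := by
      apply std_of_imset
      intro i j hij w hi hj
      rw [imset_conjS τ f hij hi hj]
      apply h i j hij
      · exact fun hmem =>
          (Finset.notMem_erase i _) (Finset.mem_of_mem_erase hmem)
      · exact Finset.notMem_erase j _
    intro S T
    have := hF (conjS τ S) (conjS τ T)
    have e1 : conjS τ (conjS τ S ∩ conjS τ T) = piMeet τ S T := by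
      conv_rhs => rw [show S = conjS τ (conjS τ S) from (conjS_conjS τ S).symm,
        show T = conjS τ (conjS τ T) from (conjS_conjS τ T).symm]
      rw [piMeet_conjS]
    have e2 : conjS τ (conjS τ S ∪ conjS τ T) = piJoin τ S T := by
      conv_rhs => rw [show S = conjS τ (conjS τ S) from (conjS_conjS τ S).symm,
        show T = conjS τ (conjS τ T) from (conjS_conjS τ T).symm]
      rw [piJoin_conjS]
    simpa [conjS_conjS, e1, e2] using this

lemma imsetExpr_comm (f : Finset (Fin n) → ℝ) (i j : Fin n) (z : Finset (Fin n)) :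
    imsetExpr f i j z = imsetExpr f j i z := by
  simp only [imsetExpr, Finset.insert_comm]
  ring

lemma imsetExpr_sum {ι : Type*} (s : Finset ι) (g : ι → Finset (Fin n) → ℝ)
    (i j : Fin n) (z : Finset (Fin n)) :
    imsetExpr (∑ k ∈ s, g k) i j z = ∑ k ∈ s, imsetExpr (g k) i j z := by
  simp only [imsetExpr, Finset.sum_apply]
  rw [← Finset.sum_add_distrib, ← Finset.sum_sub_distrib, ← Finset.sum_sub_distrib]

lemma imsetExpr_add (f g : Finset (Fin n) → ℝ) (i j : Fin n) (z : Finset (Fin n)) :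
    imsetExpr (f + g) i j z = imsetExpr f i j z + imsetExpr g i j z := by
  simp only [imsetExpr, Pi.add_apply]; ring

lemma imsetExpr_smul (c : ℝ) (f : Finset (Fin n) → ℝ) (i j : Fin n) (z : Finset (Fin n)) :
    imsetExpr (c • f) i j z = c * imsetExpr f i j z := by
  simp only [imsetExpr, Pi.smul_apply, smul_eq_mul]; ring

lemma imsetExpr_zero (i j : Fin n) (z : Finset (Fin n)) :
    imsetExpr (0 : Finset (Fin n) → ℝ) i j z = 0 := by
  simp [imsetExpr]

/-- indicator of containing both i and j -/
noncomputable def pairFun (i j : Fin n) : Finset (Fin n) → ℝ :=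
  fun S => if i ∈ S ∧ j ∈ S then 1 else 0

set_option maxHeartbeats 1000000 in
lemma imsetExpr_pairFun {i j p q : Fin n} {z : Finset (Fin n)} (hij : i ≠ j) (hpq : p ≠ q)
    (hp : p ∉ z) (hq : q ∉ z) :
    imsetExpr (pairFun i j) p q z =
      if (p = i ∧ q = j) ∨ (p = j ∧ q = i) then 1 else 0 := by
  by_cases hiz : i ∈ z <;> by_cases hjz : j ∈ z <;>
    by_cases hpi : p = i <;> by_cases hpj : p = j <;>
    by_cases hqi : q = i <;> by_cases hqj : q = j <;>
    simp_all [imsetExpr, pairFun, Finset.mem_insert] <;>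
    simp_all [eq_comm] <;> norm_num

lemma signR_cases (τ : Fin n → Bool) (i : Fin n) : signR τ i = 1 ∨ signR τ i = -1 := by
  by_cases h : τ i <;> simp [signR, h]

lemma sgn2_cases (τ : Fin n → Bool) (i j : Fin n) :
    signR τ i * signR τ j = 1 ∨ signR τ i * signR τ j = -1 := by
  rcases signR_cases τ i with h | h <;> rcases signR_cases τ j with h' | h' <;>
    rw [h, h'] <;> norm_num

variable {m : ℕ}

open Classical in
/-- witness index with opposite sign on pair (i,j), if one exists -/
noncomputable def kw (hm : 0 < m) (τ : Fin m → Fin n → Bool) (i j : Fin n) : Fin m :=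
  if hE : ∃ k, signR (τ k) i * signR (τ k) j
      = -(signR (τ ⟨0, hm⟩) i * signR (τ ⟨0, hm⟩) j) then hE.choose else ⟨0, hm⟩

/-- bound on the imset expressions of f on the pair (i,j) -/
noncomputable def Bd (f : Finset (Fin n) → ℝ) (i j : Fin n) : ℝ :=
  ∑ z : Finset (Fin n), |imsetExpr f i j z|

lemma Bd_nonneg (f : Finset (Fin n) → ℝ) (i j : Fin n) : 0 ≤ Bd f i j := by
  rw [Bd]
  exact Finset.sum_nonneg fun _ _ => abs_nonneg _

lemma abs_le_Bd (f : Finset (Fin n) → ℝ) (i j : Fin n) (z : Finset (Fin n)) :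
    |imsetExpr f i j z| ≤ Bd f i j := by
  rw [Bd]
  exact Finset.single_le_sum (f := fun w => |imsetExpr f i j w|) (fun _ _ => abs_nonneg _) (Finset.mem_univ z)

open Classical in
/-- the correction coefficient -/
noncomputable def coeff (hm : 0 < m) (τ : Fin m → Fin n → Bool) (f : Finset (Fin n) → ℝ)
    (k : Fin m) (i j : Fin n) : ℝ :=
  if ∀ k', signR (τ k') i * signR (τ k') j = signR (τ ⟨0, hm⟩) i * signR (τ ⟨0, hm⟩) j then 0
  else (if k = ⟨0, hm⟩ then 1 else 0) * (signR (τ ⟨0, hm⟩) i * signR (τ ⟨0, hm⟩) j * Bd f i j)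
     - (if k = kw hm τ i j then 1 else 0)
        * (signR (τ ⟨0, hm⟩) i * signR (τ ⟨0, hm⟩) j * Bd f i j)

lemma exists_opp (hm : 0 < m) (τ : Fin m → Fin n → Bool) (i j : Fin n)
    (hA : ¬ ∀ k', signR (τ k') i * signR (τ k') j
        = signR (τ ⟨0, hm⟩) i * signR (τ ⟨0, hm⟩) j) :
    ∃ k, signR (τ k) i * signR (τ k) j
        = -(signR (τ ⟨0, hm⟩) i * signR (τ ⟨0, hm⟩) j) := by
  push_neg at hA
  obtain ⟨k, hk⟩ := hA
  refine ⟨k, ?_⟩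
  rcases sgn2_cases (τ k) i j with h1 | h1 <;>
    rcases sgn2_cases (τ ⟨0, hm⟩) i j with h2 | h2 <;>
    rw [h1, h2] <;> rw [h1, h2] at hk <;> first | (norm_num at hk; done) | norm_num

lemma kw_spec (hm : 0 < m) (τ : Fin m → Fin n → Bool) (i j : Fin n)
    (hA : ¬ ∀ k', signR (τ k') i * signR (τ k') j
        = signR (τ ⟨0, hm⟩) i * signR (τ ⟨0, hm⟩) j) :
    signR (τ (kw hm τ i j)) i * signR (τ (kw hm τ i j)) j
        = -(signR (τ ⟨0, hm⟩) i * signR (τ ⟨0, hm⟩) j) := by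
  have hE := exists_opp hm τ i j hA
  rw [kw, dif_pos hE]
  exact hE.choose_spec

lemma kw_ne (hm : 0 < m) (τ : Fin m → Fin n → Bool) (i j : Fin n)
    (hA : ¬ ∀ k', signR (τ k') i * signR (τ k') j
        = signR (τ ⟨0, hm⟩) i * signR (τ ⟨0, hm⟩) j) :
    kw hm τ i j ≠ ⟨0, hm⟩ := by
  intro hEq
  have := kw_spec hm τ i j hA
  rw [hEq] at this
  rcases sgn2_cases (τ ⟨0, hm⟩) i j with h1 | h1 <;> rw [h1] at this <;> norm_num at this

lemma sum_coeff (hm : 0 < m) (τ : Fin m → Fin n → Bool) (f : Finset (Fin n) → ℝ) (i j : Fin n) :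
    ∑ k, coeff hm τ f k i j = 0 := by
  classical
  by_cases hA : ∀ k', signR (τ k') i * signR (τ k') j
      = signR (τ ⟨0, hm⟩) i * signR (τ ⟨0, hm⟩) j
  · simp [coeff, hA]
  · simp only [coeff, if_neg hA]
    rw [Finset.sum_sub_distrib]
    simp [Finset.sum_ite_eq', ite_mul]

end Aux


open Aux

theorem statement1 (n m : ℕ) (hm : 0 < m) (τ : Fin m → Fin n → Bool)
    (f : Finset (Fin n) → ℝ) :
    (∃ g : Fin m → Finset (Fin n) → ℝ,
        (∀ k, IsPiSupermodular (τ k) (g k)) ∧ f = ∑ k, g k) ↔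
      ∀ i j : Fin n, i ≠ j → ∀ ε : ℝ,
        (∀ k, signR (τ k) i * signR (τ k) j = ε) →
        ∀ z : Finset (Fin n), i ∉ z → j ∉ z → 0 ≤ ε * imsetExpr f i j z := by
  constructor
  · rintro ⟨g, hg, rfl⟩ i j hij ε hε z hi hj
    rw [imsetExpr_sum, Finset.mul_sum]
    apply Finset.sum_nonneg
    intro k _
    rw [← hε k]
    exact (piSupermodular_iff (τ k) (g k)).mp (hg k) i j hij z hi hj
  · intro h
    classical
    set P : Finset (Fin n × Fin n) := Finset.univ.filter (fun p : Fin n × Fin n => p.1 < p.2)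
      with hP
    set G : Fin m → Finset (Fin n) → ℝ := fun k =>
      (if k = (⟨0, hm⟩ : Fin m) then f else 0) + ∑ p ∈ P, coeff hm τ f k p.1 p.2 • pairFun p.1 p.2 with hG
    have happ : ∀ k S, G k S = (if k = (⟨0, hm⟩ : Fin m) then f S else 0)
        + ∑ p ∈ P, coeff hm τ f k p.1 p.2 * pairFun p.1 p.2 S := by
      intro k S
      rcases eq_or_ne k (⟨0, hm⟩ : Fin m) with hk | hk <;>
        simp [hG, hk, Finset.sum_apply]
    have hcomp : ∀ k p q z, p ≠ q → p ∉ z → q ∉ z → p < q →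
        imsetExpr (G k) p q z
          = (if k = (⟨0, hm⟩ : Fin m) then imsetExpr f p q z else 0) + coeff hm τ f k p q := by
      intro k p q z hpqne hp hq hpq
      rw [hG]
      rw [imsetExpr_add, imsetExpr_sum]
      congr 1
      · rcases eq_or_ne k (⟨0, hm⟩ : Fin m) with hk | hk <;> simp [hk, imsetExpr_zero]
      · rw [Finset.sum_congr rfl (fun p' hp' => by
          rw [imsetExpr_smul, imsetExpr_pairFun
            (ne_of_lt (Finset.mem_filter.mp hp').2) hpqne hp hq])]
        rw [Finset.sum_eq_single_of_mem (p, q)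
          (by simp [hP, hpq])]
        · simp
        · intro b hb hbne
          have hb2 : b.1 < b.2 := (Finset.mem_filter.mp hb).2
          rw [if_neg, mul_zero]
          rintro (⟨h1, h2⟩ | ⟨h1, h2⟩)
          · exact hbne (Prod.ext_iff.mpr ⟨h1.symm, h2.symm⟩)
          · subst h1; subst h2
            exact absurd hpq (lt_asymm hb2)
    refine ⟨G, ?_, ?_⟩
    · -- each G k is supermodular
      intro k
      rw [piSupermodular_iff]
      suffices H : ∀ p q : Fin n, p < q → ∀ z, p ∉ z → q ∉ z →
          0 ≤ signR (τ k) p * signR (τ k) q * imsetExpr (G k) p q z by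
        intro p q hpq z hp hq
        rcases lt_or_gt_of_ne hpq with h' | h'
        · exact H p q h' z hp hq
        · have := H q p h' z hq hp
          rw [imsetExpr_comm (G k) p q z, mul_comm (signR (τ k) p) (signR (τ k) q)]
          exact this
      intro p q hpq z hp hq
      have hpqne : p ≠ q := ne_of_lt hpq
      rw [hcomp k p q z hpqne hp hq hpq]
      by_cases hA : ∀ k', signR (τ k') p * signR (τ k') q
          = signR (τ (⟨0, hm⟩ : Fin m)) p * signR (τ (⟨0, hm⟩ : Fin m)) q
      · rw [coeff, if_pos hA, add_zero]
        rcases eq_or_ne k (⟨0, hm⟩ : Fin m) with hk | hk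
        · rw [if_pos hk, hk]
          exact h p q hpqne (signR (τ (⟨0, hm⟩ : Fin m)) p * signR (τ (⟨0, hm⟩ : Fin m)) q) hA z hp hq
        · rw [if_neg hk, mul_zero]
      · have hkw := kw_spec hm τ p q hA
        have hkwne := kw_ne hm τ p q hA
        have hB0 : 0 ≤ Bd f p q := Bd_nonneg f p q
        have hBd : |imsetExpr f p q z| ≤ Bd f p q := abs_le_Bd f p q z
        rcases eq_or_ne k (⟨0, hm⟩ : Fin m) with hk | hk
        · subst hk
          rw [if_pos rfl]
          rw [coeff, if_neg hA, if_pos rfl, if_neg (Ne.symm hkwne), one_mul, zero_mul,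
            sub_zero]
          rcases sgn2_cases (τ (⟨0, hm⟩ : Fin m)) p q with h1 | h1 <;> rw [h1]
          · have := neg_abs_le (imsetExpr f p q z)
            nlinarith
          · have := le_abs_self (imsetExpr f p q z)
            nlinarith
        · rw [if_neg hk, zero_add, coeff, if_neg hA, if_neg hk, zero_mul, zero_sub]
          rcases eq_or_ne k (kw hm τ p q) with hk2 | hk2
          · rw [if_pos hk2, one_mul, hk2, hkw]
            rcases sgn2_cases (τ (⟨0, hm⟩ : Fin m)) p q with h1 | h1 <;> rw [h1] <;> nlinarith
          · rw [if_neg hk2, zero_mul, neg_zero, mul_zero]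
    · -- sum equals f
      funext S
      rw [Finset.sum_apply]
      have h2 : ∑ k, ∑ p ∈ P, coeff hm τ f k p.1 p.2 * pairFun p.1 p.2 S = 0 := by
        rw [Finset.sum_comm]
        apply Finset.sum_eq_zero
        intro p _
        rw [← Finset.sum_mul, sum_coeff, zero_mul]
      calc f S = (∑ k, if k = (⟨0, hm⟩ : Fin m) then f S else 0)
            + ∑ k, ∑ p ∈ P, coeff hm τ f k p.1 p.2 * pairFun p.1 p.2 S := by
            rw [h2, add_zero, Finset.sum_ite_eq' Finset.univ (⟨0, hm⟩ : Fin m) (fun _ => f S)]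
            simp
        _ = ∑ k, G k S := by
            rw [← Finset.sum_add_distrib]
            exact Finset.sum_congr rfl fun k _ => (happ k S).symm
end

section
/- For every n ≥ 2, every function f : {0,1}^n → ℝ can be written as a sum of at most ⌈log₂ n⌉ + 1 functions, each of which is π-supermodular for some tuple π of linear orders on {0,1}; i.e., the supermodular rank of every such f is at most ⌈log₂ n⌉ + 1. -/
/-!
Statement 2: for n ≥ 2, every f : {0,1}^n → ℝ is a sum of ⌈log₂ n⌉ + 1
functions, each π-supermodular for some tuple π of linear orders on {0,1}.
(`Nat.clog 2 n` is the ceiling of log₂ n.)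
-/
open Finset

section SMRaux1
variable {n : ℕ}

lemma lin_diff (w : Fin n → ℝ) (S T : Finset (Fin n)) :
    ∑ i ∈ S ∩ T, w i + ∑ i ∈ S ∪ T, w i = ∑ i ∈ S, w i + ∑ i ∈ T, w i := by
  have h1 := Finset.sum_inter_add_sum_sdiff S T w
  have h3 : ∑ i ∈ S ∪ T, w i = ∑ i ∈ T, w i + ∑ i ∈ S \ T, w i := by
    rw [Finset.union_comm, ← Finset.union_sdiff_self_eq_union,
      Finset.sum_union Finset.sdiff_disjoint.symm, add_comm]
  linarith

lemma quad_diff (w : Fin n → ℝ) (S T : Finset (Fin n)) :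
    (∑ i ∈ S ∩ T, w i)^2 + (∑ i ∈ S ∪ T, w i)^2 - (∑ i ∈ S, w i)^2 - (∑ i ∈ T, w i)^2
      = 2 * ((∑ i ∈ S \ T, w i) * (∑ i ∈ T \ S, w i)) := by
  have h1 := Finset.sum_inter_add_sum_sdiff S T w
  have h2 := Finset.sum_inter_add_sum_sdiff T S w
  have h2' : T ∩ S = S ∩ T := Finset.inter_comm T S
  rw [h2'] at h2
  have h3 : ∑ i ∈ S ∪ T, w i = ∑ i ∈ S, w i + ∑ i ∈ T \ S, w i := by
    rw [← Finset.union_sdiff_self_eq_union, Finset.sum_union Finset.sdiff_disjoint.symm]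
  rw [h3, ← h1, ← h2]; ring

lemma card_lin (S T : Finset (Fin n)) :
    ((S ∩ T).card : ℝ) + ((S ∪ T).card : ℝ) = (S.card : ℝ) + (T.card : ℝ) := by
  have := Finset.card_inter_add_card_union S T
  exact_mod_cast congrArg (Nat.cast : ℕ → ℝ) this

lemma card_as_sum (S : Finset (Fin n)) : (S.card : ℝ) = ∑ _i ∈ S, (1:ℝ) := by simp

lemma card_quad (S T : Finset (Fin n)) :
    ((S ∩ T).card:ℝ)^2 + ((S ∪ T).card:ℝ)^2 - ((S.card:ℝ))^2 - ((T.card:ℝ))^2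
      = 2 * (((S \ T).card:ℝ) * ((T \ S).card:ℝ)) := by
  rw [card_as_sum, card_as_sum, card_as_sum, card_as_sum, card_as_sum, card_as_sum]
  exact quad_diff (fun _ => (1:ℝ)) S T

lemma abs_sum_le_card (w : Fin n → ℝ) (hw : ∀ i, w i = 1 ∨ w i = -1) (A : Finset (Fin n)) :
    |∑ i ∈ A, w i| ≤ (A.card : ℝ) := by
  calc |∑ i ∈ A, w i| ≤ ∑ i ∈ A, |w i| := Finset.abs_sum_le_sum_abs _ _
    _ = ∑ _i ∈ A, (1:ℝ) := by
        apply Finset.sum_congr rfl; intro i _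
        rcases hw i with h | h <;> rw [h] <;> norm_num
    _ = A.card := by simp

lemma prod_le (w : Fin n → ℝ) (hw : ∀ i, w i = 1 ∨ w i = -1) (A C : Finset (Fin n)) :
    (∑ i ∈ A, w i) * (∑ i ∈ C, w i) ≤ (A.card : ℝ) * C.card := by
  have hA := abs_le.1 (abs_sum_le_card w hw A)
  have hC := abs_le.1 (abs_sum_le_card w hw C)
  nlinarith [hA.1, hA.2, hC.1, hC.2]

lemma pair_bound (w : Fin n → ℝ) (hw : ∀ i, w i = 1 ∨ w i = -1)
    (A C : Finset (Fin n)) (i0 j0 : Fin n) (hi : i0 ∈ A) (hj : j0 ∈ C)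
    (hij : w i0 * w j0 = -1) :
    (∑ i ∈ A, w i) * (∑ i ∈ C, w i) ≤ (A.card : ℝ) * C.card - 2 := by
  have hu : ∑ i ∈ A, w i = ∑ i ∈ A.erase i0, w i + w i0 := (Finset.sum_erase_add A w hi).symm
  have hv : ∑ i ∈ C, w i = ∑ i ∈ C.erase j0, w i + w j0 := (Finset.sum_erase_add C w hj).symm
  have hcA : ((A.erase i0).card : ℝ) = (A.card : ℝ) - 1 := by
    rw [Finset.card_erase_of_mem hi]
    have : 1 ≤ A.card := Finset.card_pos.2 ⟨i0, hi⟩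
    push_cast [this]; ring
  have hcC : ((C.erase j0).card : ℝ) = (C.card : ℝ) - 1 := by
    rw [Finset.card_erase_of_mem hj]
    have : 1 ≤ C.card := Finset.card_pos.2 ⟨j0, hj⟩
    push_cast [this]; ring
  have hu' := abs_le.1 (abs_sum_le_card w hw (A.erase i0))
  have hv' := abs_le.1 (abs_sum_le_card w hw (C.erase j0))
  rw [hcA] at hu'
  rw [hcC] at hv'
  have main : ∀ (e : ℝ), e = w i0 → e = 1 ∨ e = -1 → w j0 = -e →
      (∑ i ∈ A, w i) * (∑ i ∈ C, w i) ≤ (A.card : ℝ) * C.card - 2 := by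
    intro e he he1 hje
    rw [hu, hv, ← he, hje]
    rcases he1 with h | h <;> rw [h] <;>
    nlinarith [hu'.1, hu'.2, hv'.1, hv'.2,
      mul_nonneg (by linarith [hu'.2] : (0:ℝ) ≤ (A.card:ℝ) - 1 - ∑ i ∈ A.erase i0, w i)
        (by linarith [hv'.2] : (0:ℝ) ≤ (C.card:ℝ) - 1 - ∑ i ∈ C.erase j0, w i),
      mul_nonneg (by linarith [hu'.1] : (0:ℝ) ≤ (A.card:ℝ) - 1 + ∑ i ∈ A.erase i0, w i)
        (by linarith [hv'.1] : (0:ℝ) ≤ (C.card:ℝ) - 1 + ∑ i ∈ C.erase j0, w i),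
      mul_nonneg (by linarith [hu'.2] : (0:ℝ) ≤ (A.card:ℝ) - 1 - ∑ i ∈ A.erase i0, w i)
        (by linarith [hv'.1] : (0:ℝ) ≤ (C.card:ℝ) - 1 + ∑ i ∈ C.erase j0, w i),
      mul_nonneg (by linarith [hu'.1] : (0:ℝ) ≤ (A.card:ℝ) - 1 + ∑ i ∈ A.erase i0, w i)
        (by linarith [hv'.2] : (0:ℝ) ≤ (C.card:ℝ) - 1 - ∑ i ∈ C.erase j0, w i)]
  refine main (w i0) rfl (hw i0) ?_
  rcases hw i0 with h1 | h1 <;> rcases hw j0 with h2 | h2 <;> rw [h1, h2] at hij ⊢ <;> linarith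

end SMRaux1

section SMRaux2
variable {n : ℕ}

lemma piMeet_true (S T : Finset (Fin n)) : piMeet (fun _ => true) S T = S ∩ T := by
  ext i; simp [piMeet]

lemma piJoin_true (S T : Finset (Fin n)) : piJoin (fun _ => true) S T = S ∪ T := by
  ext i; simp [piJoin]

lemma transport (τ : Fin n → Bool) (g : Finset (Fin n) → ℝ)
    (F : Finset (Fin n)) (hF : ∀ i, i ∈ F ↔ τ i = false)
    (H : ∀ S T : Finset (Fin n),
      g (symmDiff S F) + g (symmDiff T F) ≤ g (symmDiff (S ∩ T) F) + g (symmDiff (S ∪ T) F)) :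
    IsPiSupermodular τ g := by
  intro S T
  have hmeet : piMeet τ S T = symmDiff (symmDiff S F ∩ symmDiff T F) F := by
    ext i
    by_cases h : τ i <;>
      simp [piMeet, Finset.mem_symmDiff, hF, h] <;> tauto
  have hjoin : piJoin τ S T = symmDiff (symmDiff S F ∪ symmDiff T F) F := by
    ext i
    by_cases h : τ i <;>
      simp [piJoin, Finset.mem_symmDiff, hF, h] <;> tauto
  have := H (symmDiff S F) (symmDiff T F)
  rwa [symmDiff_symmDiff_cancel_right, symmDiff_symmDiff_cancel_right,
    ← hmeet, ← hjoin] at this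

lemma sum_pm (p : Fin n → Bool) (F : Finset (Fin n)) (hF : ∀ i, i ∈ F ↔ p i = false)
    (A : Finset (Fin n)) :
    ∑ i ∈ A, (if p i then (1:ℝ) else -1) = (A.card : ℝ) - 2 * ((A ∩ F).card : ℝ) := by
  have h1 : A ∩ F = A.filter (fun i => ¬ (p i = true)) := by
    ext i; simp [hF]
  rw [Finset.sum_ite, Finset.sum_const, Finset.sum_const, h1]
  have h2 := Finset.card_filter_add_card_filter_not (s := A) (p := fun i => p i = true)
  push_cast
  simp only [nsmul_eq_mul, mul_one, mul_neg_one] at *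
  have h2' : ((A.filter (fun i => p i = true)).card : ℝ)
      + ((A.filter (fun i => ¬ (p i = true))).card : ℝ) = (A.card : ℝ) := by
    exact_mod_cast congrArg (Nat.cast : ℕ → ℝ) h2
  linarith

lemma card_symmDiff_real (A F : Finset (Fin n)) :
    ((symmDiff A F).card : ℝ) = (A.card:ℝ) + (F.card:ℝ) - 2*((A ∩ F).card:ℝ) := by
  have h0 : symmDiff A F = (A \ F) ∪ (F \ A) := by
    ext i; simp [Finset.mem_symmDiff]
  have hdisj : Disjoint (A \ F) (F \ A) := by
    apply Finset.disjoint_left.2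
    intro i hi hj
    exact (Finset.mem_sdiff.1 hj).2 (Finset.mem_sdiff.1 hi).1
  have h2 := Finset.card_sdiff_add_card_inter A F
  have h3 := Finset.card_sdiff_add_card_inter F A
  have h4 : F ∩ A = A ∩ F := Finset.inter_comm F A
  rw [h4] at h3
  have h1 : (symmDiff A F).card = (A \ F).card + (F \ A).card := by
    rw [h0, Finset.card_union_of_disjoint hdisj]
  have := congrArg (Nat.cast : ℕ → ℝ) h1
  push_cast at this ⊢
  have h2' := congrArg (Nat.cast : ℕ → ℝ) h2
  have h3' := congrArg (Nat.cast : ℕ → ℝ) h3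
  push_cast at h2' h3'
  linarith

lemma EA (p : Fin n → Bool) (F : Finset (Fin n)) (hF : ∀ i, i ∈ F ↔ p i = false)
    (A : Finset (Fin n)) :
    ((symmDiff A F).card : ℝ) = (∑ i ∈ A, if p i then (1:ℝ) else -1) + (F.card:ℝ) := by
  rw [card_symmDiff_real, sum_pm p F hF A]; ring

lemma EB (p : Fin n → Bool) (F : Finset (Fin n)) (hF : ∀ i, i ∈ F ↔ p i = false)
    (A : Finset (Fin n)) :
    ∑ i ∈ symmDiff A F, (if p i then (1:ℝ) else -1) = (A.card:ℝ) - (F.card:ℝ) := by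
  have h1 := sum_pm p F hF (symmDiff A F)
  have h2 : symmDiff A F ∩ F = F \ A := by
    ext i; simp [Finset.mem_symmDiff]; tauto
  have h3 := Finset.card_sdiff_add_card_inter F A
  have h3' := congrArg (Nat.cast : ℕ → ℝ) h3
  push_cast at h3'
  have h4 : ((F ∩ A).card:ℝ) = ((A ∩ F).card:ℝ) := by rw [Finset.inter_comm]
  have h5 := card_symmDiff_real A F
  rw [h2] at h1
  linarith

end SMRaux2

theorem statement2 (n : ℕ) (hn : 2 ≤ n) (f : Finset (Fin n) → ℝ) :
    ∃ (τ : Fin (Nat.clog 2 n + 1) → Fin n → Bool)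
      (g : Fin (Nat.clog 2 n + 1) → Finset (Fin n) → ℝ),
      (∀ k, IsPiSupermodular (τ k) (g k)) ∧ f = ∑ k, g k := by
  classical
  set r := Nat.clog 2 n with hrdef
  have hcard : Fintype.card (Fin n) ≤ Fintype.card (Fin r → Bool) := by
    rw [Fintype.card_fun, Fintype.card_fin, Fintype.card_bool, Fintype.card_fin]
    exact Nat.le_pow_clog (by norm_num) n
  obtain ⟨e⟩ := Function.Embedding.nonempty_of_card_le hcard
  set b : Fin n → Fin r → Bool := fun i => e i with hbdef
  have hb : Function.Injective b := e.injective
  set ε : Fin r → Fin n → ℝ := fun k i => if b i k then 1 else -1 with hε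
  have hεpm : ∀ k i, ε k i = 1 ∨ ε k i = -1 := by
    intro k i
    by_cases hx : b i k <;> simp [hε, hx]
  set B := ∑ A : Finset (Fin n), |f A| with hB
  have hB0 : 0 ≤ B := Finset.sum_nonneg fun _ _ => abs_nonneg _
  have hBf : ∀ A : Finset (Fin n), |f A| ≤ B := by
    intro A
    rw [hB]
    exact Finset.single_le_sum (f := fun A => |f A|) (fun _ _ => abs_nonneg _) (Finset.mem_univ A)
  set M := 2 * B with hM
  have hM0 : 0 ≤ M := by linarith
  set h : Fin r → Finset (Fin n) → ℝ :=
    fun k S => M * ((∑ i ∈ S, ε k i)^2 - ((S.card : ℝ))^2) with hh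
  refine ⟨Fin.cons (fun _ => true) (fun k i => b i k),
      Fin.cons (fun S => f S - ∑ k, h k S) h, ?_, ?_⟩
  · intro k
    induction k using Fin.cases with
    | zero =>
      simp only [Fin.cons_zero]
      intro S T
      rw [piMeet_true, piJoin_true]
      by_cases hST : S ⊆ T
      · rw [Finset.inter_eq_left.mpr hST, Finset.union_eq_right.mpr hST]
      by_cases hTS : T ⊆ S
      · rw [Finset.inter_eq_right.mpr hTS, Finset.union_eq_left.mpr hTS]; linarith
      obtain ⟨i0, hi0S, hi0T⟩ := Finset.not_subset.1 hST
      obtain ⟨j0, hj0T, hj0S⟩ := Finset.not_subset.1 hTS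
      have hi0 : i0 ∈ S \ T := Finset.mem_sdiff.2 ⟨hi0S, hi0T⟩
      have hj0 : j0 ∈ T \ S := Finset.mem_sdiff.2 ⟨hj0T, hj0S⟩
      have hne : i0 ≠ j0 := fun hq => hi0T (hq ▸ hj0T)
      have hbne : b i0 ≠ b j0 := fun hq => hne (hb hq)
      obtain ⟨k0, hk0⟩ := Function.ne_iff.1 hbne
      have hsign : ε k0 i0 * ε k0 j0 = -1 := by
        rcases Bool.eq_false_or_eq_true (b i0 k0) with hx | hx <;>
          rcases Bool.eq_false_or_eq_true (b j0 k0) with hy | hy <;>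
          first
            | exact absurd (hx.trans hy.symm) hk0
            | simp [hε, hx, hy]
      have key0 := pair_bound (ε k0) (hεpm k0) (S \ T) (T \ S) i0 j0 hi0 hj0 hsign
      have keyk : ∀ k, 0 ≤ 2*(((S\T).card:ℝ)*((T\S).card:ℝ))
          - 2*((∑ i ∈ S\T, ε k i) * (∑ i ∈ T\S, ε k i)) := by
        intro k
        have := prod_le (ε k) (hεpm k) (S\T) (T\S)
        linarith
      have hsum4 : (4:ℝ) ≤ ∑ k, (2*(((S\T).card:ℝ)*((T\S).card:ℝ))
          - 2*((∑ i ∈ S\T, ε k i) * (∑ i ∈ T\S, ε k i))) := by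
        refine le_trans (by linarith) (Finset.single_le_sum (fun k _ => keyk k) (Finset.mem_univ k0))
      have hΔh : ∀ k : Fin r, h k (S ∩ T) + h k (S ∪ T) - h k S - h k T
          = M * (2*((∑ i ∈ S\T, ε k i) * (∑ i ∈ T\S, ε k i))
            - 2*(((S\T).card:ℝ)*((T\S).card:ℝ))) := by
        intro k
        simp only [hh]
        linear_combination M * quad_diff (ε k) S T - M * card_quad S T
      have hsum : ∑ k : Fin r, (h k (S∩T) + h k (S∪T) - h k S - h k T) ≤ -(4*M) := by
        have e1 : ∑ k : Fin r, (h k (S∩T) + h k (S∪T) - h k S - h k T)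
            = M * ∑ k : Fin r, (2*((∑ i ∈ S\T, ε k i) * (∑ i ∈ T\S, ε k i))
              - 2*(((S\T).card:ℝ)*((T\S).card:ℝ))) := by
          rw [Finset.mul_sum]
          exact Finset.sum_congr rfl fun k _ => hΔh k
        have e2 : ∑ k : Fin r, (2*((∑ i ∈ S\T, ε k i) * (∑ i ∈ T\S, ε k i))
              - 2*(((S\T).card:ℝ)*((T\S).card:ℝ)))
            = - ∑ k, (2*(((S\T).card:ℝ)*((T\S).card:ℝ))
              - 2*((∑ i ∈ S\T, ε k i) * (∑ i ∈ T\S, ε k i))) := by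
          rw [← Finset.sum_neg_distrib]
          exact Finset.sum_congr rfl fun k _ => by ring
        rw [e1, e2]
        nlinarith [hsum4, hM0]
      rw [Finset.sum_sub_distrib, Finset.sum_sub_distrib, Finset.sum_add_distrib] at hsum
      dsimp only
      have ha1 := abs_le.1 (hBf (S ∩ T))
      have ha2 := abs_le.1 (hBf (S ∪ T))
      have ha3 := abs_le.1 (hBf S)
      have ha4 := abs_le.1 (hBf T)
      have hM' : M = 2 * B := hM
      linarith [ha1.1, ha1.2, ha2.1, ha2.2, ha3.1, ha3.2, ha4.1, ha4.2]
    | succ k =>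
      simp only [Fin.cons_succ]
      set F : Finset (Fin n) := Finset.univ.filter (fun i => b i k = false) with hFdef
      have hF : ∀ i, i ∈ F ↔ (b i k) = false := by intro i; simp [hFdef]
      apply transport _ _ F hF
      intro S T
      have key : ∀ A : Finset (Fin n), h k (symmDiff A F)
          = M * (((A.card:ℝ) - (F.card:ℝ))^2 - ((∑ i ∈ A, ε k i) + (F.card:ℝ))^2) := by
        intro A
        simp only [hh, hε]
        rw [EB (fun i => b i k) F hF A, EA (fun i => b i k) F hF A]
      rw [key, key, key, key]
      have q1 := quad_diff (ε k) S T
      have q2 := card_quad S T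
      have l1 := lin_diff (ε k) S T
      have l2 := card_lin S T
      have hb1 := prod_le (ε k) (hεpm k) (S \ T) (T \ S)
      have hb2 : 0 ≤ M * (((S\T).card:ℝ) * ((T\S).card:ℝ)
          - (∑ i ∈ S\T, ε k i)*(∑ i ∈ T\S, ε k i)) :=
        mul_nonneg hM0 (by linarith)
      have e : M * ((((S∩T).card:ℝ) - (F.card:ℝ))^2 - ((∑ i ∈ S∩T, ε k i) + (F.card:ℝ))^2)
          + M * ((((S∪T).card:ℝ) - (F.card:ℝ))^2 - ((∑ i ∈ S∪T, ε k i) + (F.card:ℝ))^2)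
          - M * (((S.card:ℝ) - (F.card:ℝ))^2 - ((∑ i ∈ S, ε k i) + (F.card:ℝ))^2)
          - M * (((T.card:ℝ) - (F.card:ℝ))^2 - ((∑ i ∈ T, ε k i) + (F.card:ℝ))^2)
          = M * (2*(((S\T).card:ℝ) * ((T\S).card:ℝ))
            - 2*((∑ i ∈ S\T, ε k i)*(∑ i ∈ T\S, ε k i))) := by
        linear_combination M * q2 - M * q1 - 2*(F.card:ℝ)*M*l2 - 2*(F.card:ℝ)*M*l1
      linarith [e, hb2]
  · funext S
    rw [Finset.sum_apply, Fin.sum_univ_succ]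
    simp only [Fin.cons_zero, Fin.cons_succ]
    ring
end

section
/- For every n ≥ 3, there exists a function f : {0,1}^n → ℝ that cannot be written as a sum of ⌈log₂ n⌉ functions each of which is π-supermodular for some tuple π of linear orders on {0,1}; hence the maximum supermodular rank of functions on {0,1}^n equals ⌈log₂ n⌉ + 1. -/
lemma key_same {n : ℕ} {τ : Fin n → Bool} {g : Finset (Fin n) → ℝ}
    (hg : IsPiSupermodular τ g) {i j : Fin n} (hij : i ≠ j)
    (hτ : τ i = τ j) {z : Finset (Fin n)} (hi : i ∉ z) (hj : j ∉ z) :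
    0 ≤ imsetExpr g i j z := by
  have h := hg (insert i z) (insert j z)
  have hmeet : piMeet τ (insert i z) (insert j z) =
      (if τ i then z else insert i (insert j z)) := by
    ext x
    simp only [piMeet, Finset.mem_filter, Finset.mem_univ, true_and, Finset.mem_insert]
    rcases eq_or_ne x i with rfl | hxi
    · rcases Bool.eq_false_or_eq_true (τ x) with h1 | h1 <;>
        simp [h1, hi, hij, hij.symm]
    · rcases eq_or_ne x j with rfl | hxj
      · have : τ x = τ i := hτ.symm
        rcases Bool.eq_false_or_eq_true (τ i) with h1 | h1 <;>
          simp [this, h1, hj, hij, hij.symm, hxi]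
      · by_cases hxz : x ∈ z
        · rcases Bool.eq_false_or_eq_true (τ x) with h1 | h1 <;>
            rcases Bool.eq_false_or_eq_true (τ i) with h2 | h2 <;>
            simp [h1, h2, hxz, hxi, hxj]
        · rcases Bool.eq_false_or_eq_true (τ x) with h1 | h1 <;>
            rcases Bool.eq_false_or_eq_true (τ i) with h2 | h2 <;>
            simp [h1, h2, hxz, hxi, hxj]
  have hjoin : piJoin τ (insert i z) (insert j z) =
      (if τ i then insert i (insert j z) else z) := by
    ext x
    simp only [piJoin, Finset.mem_filter, Finset.mem_univ, true_and, Finset.mem_insert]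
    rcases eq_or_ne x i with rfl | hxi
    · rcases Bool.eq_false_or_eq_true (τ x) with h1 | h1 <;>
        simp [h1, hi, hij, hij.symm]
    · rcases eq_or_ne x j with rfl | hxj
      · have : τ x = τ i := hτ.symm
        rcases Bool.eq_false_or_eq_true (τ i) with h1 | h1 <;>
          simp [this, h1, hj, hij, hij.symm, hxi]
      · by_cases hxz : x ∈ z
        · rcases Bool.eq_false_or_eq_true (τ x) with h1 | h1 <;>
            rcases Bool.eq_false_or_eq_true (τ i) with h2 | h2 <;>
            simp [h1, h2, hxz, hxi, hxj]
        · rcases Bool.eq_false_or_eq_true (τ x) with h1 | h1 <;>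
            rcases Bool.eq_false_or_eq_true (τ i) with h2 | h2 <;>
            simp [h1, h2, hxz, hxi, hxj]
  rw [hmeet, hjoin] at h
  unfold imsetExpr
  rcases Bool.eq_false_or_eq_true (τ i) with h1 | h1 <;> simp [h1] at h <;> linarith

lemma key_diff {n : ℕ} {τ : Fin n → Bool} {g : Finset (Fin n) → ℝ}
    (hg : IsPiSupermodular τ g) {i j : Fin n} (hij : i ≠ j)
    (hτ : τ i ≠ τ j) {z : Finset (Fin n)} (hi : i ∉ z) (hj : j ∉ z) :
    imsetExpr g i j z ≤ 0 := by
  have h := hg z (insert i (insert j z))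
  have hmeet : piMeet τ z (insert i (insert j z)) =
      (if τ i then insert j z else insert i z) := by
    ext x
    simp only [piMeet, Finset.mem_filter, Finset.mem_univ, true_and, Finset.mem_insert]
    rcases eq_or_ne x i with rfl | hxi
    · rcases Bool.eq_false_or_eq_true (τ x) with h1 | h1 <;>
        simp [h1, hi, hij, hij.symm]
    · rcases eq_or_ne x j with rfl | hxj
      · have hji : τ x = !(τ i) := by
          rcases Bool.eq_false_or_eq_true (τ i) with h1 | h1 <;>
            rcases Bool.eq_false_or_eq_true (τ x) with h2 | h2 <;>
            simp_all
        rcases Bool.eq_false_or_eq_true (τ i) with h1 | h1 <;>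
          simp [hji, h1, hj, hij, hij.symm, hxi]
      · by_cases hxz : x ∈ z
        · rcases Bool.eq_false_or_eq_true (τ x) with h1 | h1 <;>
            rcases Bool.eq_false_or_eq_true (τ i) with h2 | h2 <;>
            simp [h1, h2, hxz, hxi, hxj]
        · rcases Bool.eq_false_or_eq_true (τ x) with h1 | h1 <;>
            rcases Bool.eq_false_or_eq_true (τ i) with h2 | h2 <;>
            simp [h1, h2, hxz, hxi, hxj]
  have hjoin : piJoin τ z (insert i (insert j z)) =
      (if τ i then insert i z else insert j z) := by
    ext x
    simp only [piJoin, Finset.mem_filter, Finset.mem_univ, true_and, Finset.mem_insert]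
    rcases eq_or_ne x i with rfl | hxi
    · rcases Bool.eq_false_or_eq_true (τ x) with h1 | h1 <;>
        simp [h1, hi, hij, hij.symm]
    · rcases eq_or_ne x j with rfl | hxj
      · have hji : τ x = !(τ i) := by
          rcases Bool.eq_false_or_eq_true (τ i) with h1 | h1 <;>
            rcases Bool.eq_false_or_eq_true (τ x) with h2 | h2 <;>
            simp_all
        rcases Bool.eq_false_or_eq_true (τ i) with h1 | h1 <;>
          simp [hji, h1, hj, hij, hij.symm, hxi]
      · by_cases hxz : x ∈ z
        · rcases Bool.eq_false_or_eq_true (τ x) with h1 | h1 <;>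
            rcases Bool.eq_false_or_eq_true (τ i) with h2 | h2 <;>
            simp [h1, h2, hxz, hxi, hxj]
        · rcases Bool.eq_false_or_eq_true (τ x) with h1 | h1 <;>
            rcases Bool.eq_false_or_eq_true (τ i) with h2 | h2 <;>
            simp [h1, h2, hxz, hxi, hxj]
  rw [hmeet, hjoin] at h
  unfold imsetExpr
  rcases Bool.eq_false_or_eq_true (τ i) with h1 | h1 <;> simp [h1] at h <;> linarith

lemma parity_imset {n : ℕ} {i j : Fin n} (hij : i ≠ j) {z : Finset (Fin n)}
    (hi : i ∉ z) (hj : j ∉ z) :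
    imsetExpr (fun S => (-1 : ℝ) ^ S.card) i j z = 4 * (-1 : ℝ) ^ z.card := by
  have h1 : (insert j z).card = z.card + 1 := Finset.card_insert_of_notMem hj
  have h2 : (insert i z).card = z.card + 1 := Finset.card_insert_of_notMem hi
  have h3 : (insert i (insert j z)).card = z.card + 2 := by
    rw [Finset.card_insert_of_notMem (by simp [hij, hi]), h1]
  simp only [imsetExpr]
  rw [h1, h2, h3]
  ring


/-!
Statement 3: for n ≥ 3 there is a function on {0,1}^n which is not a sum of
⌈log₂ n⌉ π-supermodular functions; hence the maximum supermodular rank is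
⌈log₂ n⌉ + 1. (`Nat.clog 2 n` is the ceiling of log₂ n. Since the zero function
is π-supermodular, "a sum of at most k such functions" is equivalent to
"a sum of exactly k such functions".)
-/
theorem statement3 (n : ℕ) (hn : 3 ≤ n) :
    ∃ f : Finset (Fin n) → ℝ,
      ¬ ∃ (τ : Fin (Nat.clog 2 n) → Fin n → Bool)
          (g : Fin (Nat.clog 2 n) → Finset (Fin n) → ℝ),
          (∀ k, IsPiSupermodular (τ k) (g k)) ∧ f = ∑ k, g k := by
  set r := Nat.clog 2 n with hr
  refine ⟨fun S => (-1 : ℝ) ^ S.card, ?_⟩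
  rintro ⟨τ, g, hg, hf⟩
  have hr2 : 2 ≤ r := by
    have := (Nat.lt_clog_iff_pow_lt (b := 2) one_lt_two (x := n) (y := 1)).mpr (by omega)
    omega
  have hr0 : 0 < r := by omega
  let k0 : Fin r := ⟨0, hr0⟩
  -- pigeonhole map
  let φ : Fin n → ({k : Fin r // k ≠ k0} → Bool) := fun i k => xor (τ k.1 i) (τ k0 i)
  have hcard : Fintype.card ({k : Fin r // k ≠ k0} → Bool) < n := by
    have hc1 : Fintype.card {k : Fin r // k ≠ k0} = r - 1 := by
      rw [Fintype.card_subtype_compl, Fintype.card_subtype_eq]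
      simp
    rw [Fintype.card_fun, hc1, Fintype.card_bool]
    have := Nat.pow_pred_clog_lt_self (b := 2) one_lt_two (x := n) (by omega)
    simpa [hr] using this
  obtain ⟨i, j, hij, hφ⟩ := Fintype.exists_ne_map_eq_of_card_lt φ (by simpa [Fintype.card_fin] using hcard)
  -- from hφ: for all k, xor (τ k i) (τ k0 i) = xor (τ k j) (τ k0 j)
  have hall : ∀ k : Fin r, xor (τ k i) (τ k0 i) = xor (τ k j) (τ k0 j) := by
    intro k
    rcases eq_or_ne k k0 with rfl | hk
    · simp
    · exact congrFun hφ ⟨k, hk⟩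
  -- third element
  obtain ⟨a, ha⟩ : (Finset.univ \ {i, j} : Finset (Fin n)).Nonempty := by
    rw [← Finset.card_pos]
    have : ({i, j} : Finset (Fin n)).card ≤ 2 := Finset.card_le_two
    have hcu : (Finset.univ : Finset (Fin n)).card = n := by simp
    have := Finset.le_card_sdiff ({i, j} : Finset (Fin n)) Finset.univ
    omega
  simp only [Finset.mem_sdiff, Finset.mem_insert, Finset.mem_singleton, not_or] at ha
  have hia : i ∉ ({a} : Finset (Fin n)) := by simp [Ne.symm ha.2.1]
  have hja : j ∉ ({a} : Finset (Fin n)) := by simp [Ne.symm ha.2.2]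
  have hsum : ∀ z : Finset (Fin n),
      imsetExpr (fun S => (-1 : ℝ) ^ S.card) i j z = ∑ k, imsetExpr (g k) i j z := by
    intro z
    have hfa : ∀ S : Finset (Fin n), (-1 : ℝ) ^ S.card = ∑ k, g k S := by
      intro S
      have := congrFun hf S
      simpa using this
    simp only [imsetExpr, hfa]
    rw [Finset.sum_sub_distrib, Finset.sum_sub_distrib, Finset.sum_add_distrib]
  by_cases hcase : τ k0 i = τ k0 j
  · -- all components equal: imsetExpr g_k ≥ 0; contradict at z = {a}
    have heq : ∀ k, τ k i = τ k j := by
      intro k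
      have h := hall k
      rw [hcase] at h
      cases hb : τ k0 j <;> rw [hb] at h <;> simpa using h
    have hpos : (0:ℝ) ≤ imsetExpr (fun S => (-1 : ℝ) ^ S.card) i j {a} := by
      rw [hsum]
      exact Finset.sum_nonneg fun k _ => key_same (hg k) hij (heq k) hia hja
    rw [parity_imset hij hia hja] at hpos
    simp at hpos
    linarith
  · have hne : ∀ k, τ k i ≠ τ k j := by
      intro k hk
      apply hcase
      have h := hall k
      rw [hk] at h
      cases hb : τ k j <;> rw [hb] at h <;>
        cases hc : τ k0 i <;> rw [hc] at h <;>
        cases hd : τ k0 j <;> rw [hd] at h <;> simp_all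
    have hneg : imsetExpr (fun S => (-1 : ℝ) ^ S.card) i j (∅ : Finset (Fin n)) ≤ 0 := by
      rw [hsum]
      exact Finset.sum_nonpos fun k _ => key_diff (hg k) hij (hne k) (by simp) (by simp)
    rw [parity_imset hij (by simp) (by simp)] at hneg
    simp at hneg
    linarith
end

section
/- Let n ≥ 3 and let f : {0,1}^n → ℝ be strictly submodular, i.e. A^{(ij)} f < 0 for all i ≠ j in [n]. Then the supermodular rank of f is exactly ⌈log₂ n⌉: f can be written as a sum of ⌈log₂ n⌉ π-supermodular functions but not as a sum of fewer. -/
open Finset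

section

variable {n : ℕ}

def IsSupermodular (f : Finset (Fin n) → ℝ) : Prop :=
  ∀ S T : Finset (Fin n), f S + f T ≤ f (S ∩ T) + f (S ∪ T)

def IsStrictlySubmodular (f : Finset (Fin n) → ℝ) : Prop :=
  ∀ i j : Fin n, i ≠ j → ∀ z : Finset (Fin n), i ∉ z → j ∉ z → imsetExpr f i j z < 0

section StandardOrder

variable {f : Finset (Fin n) → ℝ}

theorem marginal_mono_of_imsetExpr_nonneg
    (hf : ∀ i j : Fin n, i ≠ j → ∀ z, i ∉ z → j ∉ z → 0 ≤ imsetExpr f i j z)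
    {S T : Finset (Fin n)} {i : Fin n} (hST : S ⊆ T) (hiT : i ∉ T) :
    f (insert i S) - f S ≤ f (insert i T) - f T := by
  obtain ⟨D, rfl⟩ : ∃ D, T = S ∪ D := ⟨T, (union_eq_right.2 hST).symm⟩
  clear hST
  induction D using Finset.induction_on with
  | empty => simp
  | insert j D _ ih =>
    rw [union_insert] at hiT ⊢
    have hiSD : i ∉ S ∪ D := fun h => hiT (mem_insert_of_mem h)
    by_cases hj : j ∈ S ∪ D
    · rw [insert_eq_of_mem hj]
      exact ih hiSD
    · have hij : i ≠ j := by rintro rfl; exact hiT (mem_insert_self _ _)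
      have := hf i j hij (S ∪ D) hiSD hj
      unfold imsetExpr at this
      linarith [ih hiSD]

theorem isSupermodular_of_imsetExpr_nonneg
    (hf : ∀ i j : Fin n, i ≠ j → ∀ z, i ∉ z → j ∉ z → 0 ≤ imsetExpr f i j z) :
    IsSupermodular f := by
  intro S T
  suffices key : ∀ D, Disjoint D T → ∀ M ⊆ T, f (M ∪ D) + f T ≤ f M + f (T ∪ D) by
    have := key (S \ T) sdiff_disjoint (S ∩ T) inter_subset_right
    rwa [union_comm (S ∩ T), sdiff_union_inter, union_sdiff_self_eq_union, union_comm T] at this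
  intro D hD M hM
  induction D using Finset.induction_on with
  | empty => simp
  | insert a D _ ih =>
    rw [disjoint_insert_left] at hD
    have := marginal_mono_of_imsetExpr_nonneg hf (i := a)
      (union_subset_union_left hM : M ∪ D ⊆ T ∪ D) (by simp [hD.1, *])
    rw [union_insert, union_insert]
    linarith [ih hD.2]

theorem imsetExpr_nonneg_of_isSupermodular (hf : IsSupermodular f) {i j : Fin n} (hij : i ≠ j)
    {z : Finset (Fin n)} (hiz : i ∉ z) (hjz : j ∉ z) : 0 ≤ imsetExpr f i j z := by
  have := hf (insert i z) (insert j z)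
  rw [insert_inter_of_notMem (by simp [hij, hiz]), inter_insert_of_notMem hjz, inter_self,
    insert_union, union_insert, union_self] at this
  unfold imsetExpr
  linarith

end StandardOrder

section SignFlip

variable (τ : Fin n → Bool)

def signFlip (S : Finset (Fin n)) : Finset (Fin n) :=
  univ.filter fun k => if τ k then k ∈ S else k ∉ S

theorem mem_signFlip {S : Finset (Fin n)} {k : Fin n} :
    k ∈ signFlip τ S ↔ if τ k then k ∈ S else k ∉ S := by
  simp [signFlip]

theorem signFlip_involutive : Function.Involutive (signFlip τ) := by
  intro S
  ext k
  cases h : τ k <;> simp [mem_signFlip, h]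

@[simp]
theorem signFlip_signFlip (S : Finset (Fin n)) : signFlip τ (signFlip τ S) = S :=
  signFlip_involutive τ S

theorem piMeet_eq_signFlip (S T : Finset (Fin n)) :
    piMeet τ S T = signFlip τ (signFlip τ S ∩ signFlip τ T) := by
  ext k
  cases h : τ k <;> simp [mem_signFlip, piMeet, h]
  tauto

theorem piJoin_eq_signFlip (S T : Finset (Fin n)) :
    piJoin τ S T = signFlip τ (signFlip τ S ∪ signFlip τ T) := by
  ext k
  cases h : τ k <;> simp [mem_signFlip, piJoin, h]

theorem isPiSupermodular_iff_isSupermodular_comp_signFlip {f : Finset (Fin n) → ℝ} :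
    IsPiSupermodular τ f ↔ IsSupermodular (f ∘ signFlip τ) := by
  constructor
  · intro hf S T
    simpa [piMeet_eq_signFlip, piJoin_eq_signFlip] using hf (signFlip τ S) (signFlip τ T)
  · intro hf S T
    simpa [piMeet_eq_signFlip, piJoin_eq_signFlip] using hf (signFlip τ S) (signFlip τ T)

end SignFlip

section Corner

variable {i j k : Fin n} {z : Finset (Fin n)}

def corner (i j : Fin n) (z : Finset (Fin n)) (a b : Bool) : Finset (Fin n) :=
  cond a (insert i (cond b (insert j z) z)) (cond b (insert j z) z)

theorem imsetExpr_eq_corner (f : Finset (Fin n) → ℝ) : imsetExpr f i j z =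
    f (corner i j z false false) + f (corner i j z true true)
      - f (corner i j z true false) - f (corner i j z false true) :=
  rfl

theorem mem_corner {a b : Bool} :
    k ∈ corner i j z a b ↔ (k = i ∧ a = true) ∨ (k = j ∧ b = true) ∨ k ∈ z := by
  cases a <;> cases b <;> simp [corner]

theorem signFlip_corner (τ : Fin n → Bool) (hij : i ≠ j) (hiz : i ∉ z) (hjz : j ∉ z)
    (a b : Bool) :
    signFlip τ (corner i j z a b) =
      corner i j (signFlip τ z \ {i, j}) (a == τ i) (b == τ j) := by
  ext k
  by_cases hki : k = i
  · subst hki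
    cases a <;> cases h : τ k <;> simp [mem_signFlip, mem_corner, h, hij, hiz]
  by_cases hkj : k = j
  · subst hkj
    cases b <;> cases h : τ k <;> simp [mem_signFlip, mem_corner, h, hki, hjz]
  cases h : τ k <;> simp [mem_signFlip, mem_corner, h, hki, hkj]

theorem imsetExpr_comp_signFlip (τ : Fin n → Bool) (f : Finset (Fin n) → ℝ) (hij : i ≠ j)
    (hiz : i ∉ z) (hjz : j ∉ z) :
    imsetExpr (f ∘ signFlip τ) i j z =
      signR τ i * signR τ j * imsetExpr f i j (signFlip τ z \ {i, j}) := by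
  simp only [imsetExpr_eq_corner, Function.comp_apply, signFlip_corner τ hij hiz hjz]
  cases hi : τ i <;> cases hj : τ j <;> simp [signR, hi, hj] <;> ring

end Corner

theorem signR_mul_signR (τ : Fin n → Bool) (i j : Fin n) :
    signR τ i * signR τ j = if τ i = τ j then 1 else -1 := by
  cases hi : τ i <;> cases hj : τ j <;> simp [signR, hi, hj]

theorem isPiSupermodular_iff {τ : Fin n → Bool} {f : Finset (Fin n) → ℝ} :
    IsPiSupermodular τ f ↔ ∀ i j : Fin n, i ≠ j → ∀ z, i ∉ z → j ∉ z →
      0 ≤ signR τ i * signR τ j * imsetExpr f i j z := by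
  rw [isPiSupermodular_iff_isSupermodular_comp_signFlip]
  constructor
  · intro hf i j hij z hiz hjz
    have key := imsetExpr_comp_signFlip τ (f ∘ signFlip τ) hij hiz hjz
    rw [Function.comp_assoc, (signFlip_involutive τ).comp_self, Function.comp_id] at key
    have hsq : signR τ i * signR τ j * (signR τ i * signR τ j) = 1 := by
      rw [signR_mul_signR]; split_ifs <;> norm_num
    rw [key, ← mul_assoc, hsq, one_mul]
    exact imsetExpr_nonneg_of_isSupermodular hf hij (by simp) (by simp)
  · intro h
    refine isSupermodular_of_imsetExpr_nonneg fun i j hij z hiz hjz => ?_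
    rw [imsetExpr_comp_signFlip τ f hij hiz hjz]
    exact h i j hij _ (by simp) (by simp)

section Linear

variable {i j : Fin n} {z : Finset (Fin n)}

theorem imsetExpr_sub (f g : Finset (Fin n) → ℝ) :
    imsetExpr (f - g) i j z = imsetExpr f i j z - imsetExpr g i j z := by
  simp only [imsetExpr, Pi.sub_apply]
  ring

theorem imsetExpr_sum {ι : Type*} (s : Finset ι) (g : ι → Finset (Fin n) → ℝ) :
    imsetExpr (∑ k ∈ s, g k) i j z = ∑ k ∈ s, imsetExpr (g k) i j z := by
  simp only [imsetExpr, Finset.sum_apply, sum_add_distrib, sum_sub_distrib]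

def pairSum (w : Fin n → Fin n → ℝ) (S : Finset (Fin n)) : ℝ :=
  ∑ p ∈ S, ∑ q ∈ S, w p q

theorem pairSum_insert (w : Fin n → Fin n → ℝ) {S : Finset (Fin n)} (hi : i ∉ S) :
    pairSum w (insert i S) = pairSum w S + w i i + ∑ q ∈ S, (w i q + w q i) := by
  simp only [pairSum, sum_insert hi, sum_add_distrib]
  ring

theorem imsetExpr_pairSum (w : Fin n → Fin n → ℝ) (hij : i ≠ j) (hiz : i ∉ z) (hjz : j ∉ z) :
    imsetExpr (pairSum w) i j z = w i j + w j i := by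
  have hi : i ∉ insert j z := by simp [hij, hiz]
  simp only [imsetExpr, pairSum_insert w hi, pairSum_insert w hiz, pairSum_insert w hjz,
    sum_insert hjz]
  ring

theorem isPiSupermodular_pairSum {τ : Fin n → Bool} {w : Fin n → Fin n → ℝ}
    (hw : ∀ i j : Fin n, i ≠ j → 0 ≤ signR τ i * signR τ j * (w i j + w j i)) :
    IsPiSupermodular τ (pairSum w) :=
  isPiSupermodular_iff.2 fun i j hij _ hiz hjz => by
    rw [imsetExpr_pairSum w hij hiz hjz]
    exact hw i j hij

end Linear

theorem injective_signs_of_eq_sum {f : Finset (Fin n) → ℝ} (hf : IsStrictlySubmodular f)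
    {r : ℕ} {τ : Fin r → Fin n → Bool} {g : Fin r → Finset (Fin n) → ℝ}
    (hg : ∀ k, IsPiSupermodular (τ k) (g k)) (hsum : f = ∑ k, g k) :
    Function.Injective fun i k => τ k i := by
  intro i j hτ
  by_contra hij
  have hnonneg (k : Fin r) : 0 ≤ imsetExpr (g k) i j ∅ := by
    have := isPiSupermodular_iff.1 (hg k) i j hij ∅ (notMem_empty i) (notMem_empty j)
    rwa [signR_mul_signR, if_pos (congrFun hτ k : τ k i = τ k j), one_mul] at this
  have hneg := hf i j hij ∅ (notMem_empty i) (notMem_empty j)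
  rw [hsum, imsetExpr_sum] at hneg
  exact (sum_nonneg fun k _ => hnonneg k).not_gt hneg

theorem exists_nonpos_le_imsetExpr (f : Finset (Fin n) → ℝ) :
    ∃ c ≤ 0, ∀ i j z, c ≤ imsetExpr f i j z := by
  obtain ⟨C, hC⟩ := (Set.finite_range fun x : Fin n × Fin n × Finset (Fin n) =>
    imsetExpr f x.1 x.2.1 x.2.2).bddBelow
  exact ⟨min C 0, min_le_right _ _, fun i j z => (min_le_left _ _).trans (hC ⟨(i, j, z), rfl⟩)⟩

theorem isPiSupermodular_sub_sum_pairSum {τ : Fin n → Bool} {f : Finset (Fin n) → ℝ}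
    {ι : Type*} (s : Finset ι) (w : ι → Fin n → Fin n → ℝ)
    (h : ∀ i j : Fin n, i ≠ j → ∀ z, i ∉ z → j ∉ z →
      0 ≤ signR τ i * signR τ j * (imsetExpr f i j z - ∑ k ∈ s, (w k i j + w k j i))) :
    IsPiSupermodular τ (f - ∑ k ∈ s, pairSum (w k)) :=
  isPiSupermodular_iff.2 fun i j hij z hiz hjz => by
    rw [imsetExpr_sub, imsetExpr_sum]
    simp only [imsetExpr_pairSum _ hij hiz hjz]
    exact h i j hij z hiz hjz

theorem exists_eq_sum_of_injective {f : Finset (Fin n) → ℝ} (hf : IsStrictlySubmodular f)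
    {m : ℕ} {e : Fin n → Fin (m + 1) → Bool} (he : Function.Injective e) :
    ∃ (τ : Fin (m + 1) → Fin n → Bool) (g : Fin (m + 1) → Finset (Fin n) → ℝ),
      (∀ k, IsPiSupermodular (τ k) (g k)) ∧ f = ∑ k, g k := by
  obtain ⟨c, hc0, hc⟩ := exists_nonpos_le_imsetExpr f
  let w : Fin m → Fin n → Fin n → ℝ := fun k p q =>
    if e p 0 = e q 0 ∧ e p k.succ ≠ e q k.succ then c else 0
  have hw (k : Fin m) (p q : Fin n) : w k p q + w k q p ≤ 0 := by
    simp only [w]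
    split_ifs <;> linarith
  refine ⟨fun k i => e i k, Fin.cons (f - ∑ k, pairSum (w k)) fun k => pairSum (w k),
    fun k => ?_, ?_⟩
  · cases k using Fin.cases with
    | zero =>
      refine isPiSupermodular_sub_sum_pairSum _ w fun i j hij z hiz hjz => ?_
      rw [signR_mul_signR]
      split_ifs with h0
      · obtain ⟨k, hk⟩ : ∃ k : Fin m, e i k.succ ≠ e j k.succ := by
          obtain ⟨k, hk⟩ := Function.ne_iff.1 (he.ne hij)
          obtain ⟨k, rfl⟩ := Fin.exists_succ_eq.2 fun hk0 : k = 0 => hk (hk0 ▸ h0)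
          exact ⟨k, hk⟩
        have hle : ∑ k, (w k i j + w k j i) ≤ w k i j + w k j i := by
          rw [← add_sum_erase _ _ (mem_univ k)]
          exact add_le_of_nonpos_right (sum_nonpos fun k _ => hw k i j)
        have hwk : w k i j + w k j i = c + c := by simp [w, h0, hk, Ne.symm hk]
        linarith [hc i j z]
      · have hwk (k : Fin m) : w k i j + w k j i = 0 := by simp [w, h0, Ne.symm h0]
        simp only [hwk, sum_const_zero, sub_zero]
        linarith [hf i j hij z hiz hjz]
    | succ k =>
      refine isPiSupermodular_pairSum fun i j _ => ?_
      rw [signR_mul_signR]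
      split_ifs with hk
      · simp [w, hk]
      · linarith [hw k i j]
  · rw [Fin.sum_univ_succ, Fin.cons_zero]
    simp only [Fin.cons_succ]
    exact (sub_add_cancel _ _).symm

end

theorem statement4 (n : ℕ) (hn : 3 ≤ n) (f : Finset (Fin n) → ℝ)
    (hstrict : ∀ i j : Fin n, i ≠ j → ∀ z : Finset (Fin n), i ∉ z → j ∉ z →
      imsetExpr f i j z < 0) :
    (∃ (τ : Fin (Nat.clog 2 n) → Fin n → Bool)
        (g : Fin (Nat.clog 2 n) → Finset (Fin n) → ℝ),
        (∀ k, IsPiSupermodular (τ k) (g k)) ∧ f = ∑ k, g k) ∧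
    ¬ ∃ (τ : Fin (Nat.clog 2 n - 1) → Fin n → Bool)
        (g : Fin (Nat.clog 2 n - 1) → Finset (Fin n) → ℝ),
        (∀ k, IsPiSupermodular (τ k) (g k)) ∧ f = ∑ k, g k := by
  obtain ⟨m, hm⟩ : ∃ m, Nat.clog 2 n = m + 1 :=
    Nat.exists_eq_succ_of_ne_zero (Nat.clog_pos one_lt_two (by omega)).ne'
  rw [hm, Nat.add_sub_cancel]
  constructor
  · have hcard : Fintype.card (Fin n) ≤ Fintype.card (Fin (m + 1) → Bool) := by
      simpa [hm] using Nat.le_pow_clog one_lt_two n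
    obtain ⟨e⟩ := Function.Embedding.nonempty_of_card_le hcard
    exact exists_eq_sum_of_injective hstrict e.injective
  · rintro ⟨τ, g, hg, hsum⟩
    have hcard := Fintype.card_le_of_injective _ (injective_signs_of_eq_sum hstrict hg hsum)
    have hlt := Nat.pow_pred_clog_lt_self one_lt_two (by omega : 1 < n)
    simp only [hm, Fintype.card_fin, Fintype.card_fun, Fintype.card_bool, Nat.add_sub_cancel,
      Nat.pred_eq_sub_one] at hcard hlt
    omega
end

section
/- Every function f : {0,1}^n → ℝ admits a decomposition f = f_0 + f_1 + ⋯ + f_{n−1}, where f_0 is submodular and, for each i = 1,…,n−1, the function f_i is {i}-submodular. In particular, the elementary submodular rank of every function on {0,1}^n is at most n. -/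
/-- A set function is submodular: f(S∩T) + f(S∪T) ≤ f(S) + f(T). -/
def IsSubmodular {n : ℕ} (f : Finset (Fin n) → ℝ) : Prop :=
  ∀ S T : Finset (Fin n), f (S ∩ T) + f (S ∪ T) ≤ f S + f T

/-- The sign vector with −1 in coordinate `i` and +1 elsewhere. -/
def elemSign {n : ℕ} (i : Fin n) : Fin n → Bool := fun j => decide (j ≠ i)

/-- `f` is {i}-submodular: −f is π-supermodular for the tuple of linear orders
whose sign vector has τ_i = −1 and τ_j = 1 for j ≠ i. -/
def IsElemSubmodular {n : ℕ} (i : Fin n) (f : Finset (Fin n) → ℝ) : Prop :=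
  IsPiSupermodular (elemSign i) (fun S => -(f S))

/-!
For `j ∈ S` let `d_j(S) = |S ∖ {j}|` (the degree of `j` in the complete graph on `S`),
and `d_j(S) = 0` otherwise. Every `d_j` is `{j}`-submodular, and it is supermodular, with a gain
of at least one on pairs `S, T` with `j ∈ S ∖ T` and `T ⊈ S`. For incomparable `S, T` there
are `j ∈ S ∖ T` and `k ∈ T ∖ S`, not both equal to the distinguished coordinate `0`, so
`g = ∑_{j ≠ 0} d_j` gains at least one on every incomparable pair, while comparable pairs
satisfy the submodular inequality with equality for any function. Hence `f - C g` is
submodular as soon as `C` bounds the submodular defect of `f`, and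
`f = (f - C g) + ∑_{j ≠ 0} C d_j`.
-/

open Finset

section CliqueDegree

variable {α : Type*} [DecidableEq α]

def cliqueDegree (j : α) (S : Finset α) : ℕ :=
  if j ∈ S then #(S.erase j) else 0

theorem cliqueDegree_of_mem {j : α} {S : Finset α} (h : j ∈ S) :
    cliqueDegree j S = #(S.erase j) :=
  if_pos h

theorem cliqueDegree_of_notMem {j : α} {S : Finset α} (h : j ∉ S) : cliqueDegree j S = 0 :=
  if_neg h

theorem card_erase_inter_add_card_erase_union {j : α} {S T : Finset α} (hS : j ∈ S)
    (hT : j ∈ T) :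
    #((S ∩ T).erase j) + #((S ∪ T).erase j) = #(S.erase j) + #(T.erase j) := by
  have := card_union_add_card_inter S T
  have := card_erase_add_one hS
  have := card_erase_add_one hT
  have := card_erase_add_one (mem_inter.2 ⟨hS, hT⟩)
  have := card_erase_add_one (mem_union_left T hS)
  omega

theorem cliqueDegree_add_le_inter_add_union (j : α) (S T : Finset α) :
    cliqueDegree j S + cliqueDegree j T ≤
      cliqueDegree j (S ∩ T) + cliqueDegree j (S ∪ T) := by
  by_cases hS : j ∈ S <;> by_cases hT : j ∈ T
  · simp only [cliqueDegree, hS, hT, mem_inter, mem_union, and_self, or_self, if_true,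
      card_erase_inter_add_card_erase_union hS hT, le_refl]
  · simp only [cliqueDegree, hS, hT, mem_inter, mem_union, and_false, or_false, if_true,
      if_false, add_zero, zero_add]
    exact card_le_card (erase_subset_erase j subset_union_left)
  · simp only [cliqueDegree, hS, hT, mem_inter, mem_union, false_and, false_or, if_true,
      if_false, zero_add]
    exact card_le_card (erase_subset_erase j subset_union_right)
  · simp [cliqueDegree, hS, hT]

theorem cliqueDegree_add_lt_inter_add_union {j : α} {S T : Finset α} (hjS : j ∈ S)
    (hjT : j ∉ T) (hTS : ¬T ⊆ S) :
    cliqueDegree j S + cliqueDegree j T < cliqueDegree j (S ∩ T) + cliqueDegree j (S ∪ T) := by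
  obtain ⟨k, hkT, hkS⟩ := not_subset.1 hTS
  have hkj : k ≠ j := fun h => hjT (h ▸ hkT)
  rw [cliqueDegree_of_mem hjS, cliqueDegree_of_notMem hjT,
    cliqueDegree_of_notMem fun h => hjT (mem_inter.1 h).2,
    cliqueDegree_of_mem (mem_union_left T hjS), add_zero, zero_add]
  refine card_lt_card ((ssubset_iff_of_subset (erase_subset_erase j subset_union_left)).2 ?_)
  exact ⟨k, mem_erase.2 ⟨hkj, mem_union_right S hkT⟩, fun h => hkS (mem_of_mem_erase h)⟩

theorem sum_cliqueDegree_add_lt_inter_add_union {J : Finset α} {j : α} {S T : Finset α}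
    (hjJ : j ∈ J) (hjS : j ∈ S) (hjT : j ∉ T) (hTS : ¬T ⊆ S) :
    ∑ i ∈ J, cliqueDegree i S + ∑ i ∈ J, cliqueDegree i T <
      ∑ i ∈ J, cliqueDegree i (S ∩ T) + ∑ i ∈ J, cliqueDegree i (S ∪ T) := by
  simp only [← sum_add_distrib]
  exact sum_lt_sum (fun i _ => cliqueDegree_add_le_inter_add_union i S T)
    ⟨j, hjJ, cliqueDegree_add_lt_inter_add_union hjS hjT hTS⟩

theorem sum_erase_cliqueDegree_add_lt_inter_add_union [Fintype α] (i₀ : α) {S T : Finset α}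
    (hST : ¬S ⊆ T) (hTS : ¬T ⊆ S) :
    ∑ i ∈ univ.erase i₀, cliqueDegree i S + ∑ i ∈ univ.erase i₀, cliqueDegree i T <
      ∑ i ∈ univ.erase i₀, cliqueDegree i (S ∩ T) +
        ∑ i ∈ univ.erase i₀, cliqueDegree i (S ∪ T) := by
  obtain ⟨j, hjS, hjT⟩ := not_subset.1 hST
  obtain ⟨k, hkT, hkS⟩ := not_subset.1 hTS
  by_cases hj : j = i₀
  · have hk : k ≠ i₀ := fun hk => hkS (hk ▸ hj ▸ hjS)
    rw [inter_comm, union_comm, add_comm]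
    exact sum_cliqueDegree_add_lt_inter_add_union (mem_erase.2 ⟨hk, mem_univ k⟩) hkT hkS hST
  · exact sum_cliqueDegree_add_lt_inter_add_union (mem_erase.2 ⟨hj, mem_univ j⟩) hjS hjT hTS

end CliqueDegree

theorem add_le_add_add_four_mul_sum_abs {ι : Type*} [Fintype ι] (f : ι → ℝ) (a b c d : ι) :
    f a + f b ≤ f c + f d + 4 * ∑ x, |f x| := by
  have h x := abs_le.1 (single_le_sum (f := fun x => |f x|) (fun _ _ => abs_nonneg _) (mem_univ x))
  linarith [(h a).2, (h b).2, (h c).1, (h d).1]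

section SignedProducts

variable {n : ℕ}

theorem mem_piMeet_elemSign_self (i : Fin n) (S T : Finset (Fin n)) :
    i ∈ piMeet (elemSign i) S T ↔ i ∈ S ∨ i ∈ T := by
  simp [piMeet, elemSign]

theorem mem_piJoin_elemSign_self (i : Fin n) (S T : Finset (Fin n)) :
    i ∈ piJoin (elemSign i) S T ↔ i ∈ S ∧ i ∈ T := by
  simp [piJoin, elemSign]

theorem erase_piMeet_elemSign (i : Fin n) (S T : Finset (Fin n)) :
    (piMeet (elemSign i) S T).erase i = (S ∩ T).erase i := by
  ext j
  by_cases h : j = i <;> simp [piMeet, elemSign, h]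

theorem erase_piJoin_elemSign (i : Fin n) (S T : Finset (Fin n)) :
    (piJoin (elemSign i) S T).erase i = (S ∪ T).erase i := by
  ext j
  by_cases h : j = i <;> simp [piJoin, elemSign, h]

theorem cliqueDegree_piMeet_add_piJoin_le (i : Fin n) (S T : Finset (Fin n)) :
    cliqueDegree i (piMeet (elemSign i) S T) + cliqueDegree i (piJoin (elemSign i) S T) ≤
      cliqueDegree i S + cliqueDegree i T := by
  simp only [cliqueDegree, mem_piMeet_elemSign_self, mem_piJoin_elemSign_self,
    erase_piMeet_elemSign, erase_piJoin_elemSign]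
  by_cases hS : i ∈ S <;> by_cases hT : i ∈ T
  · simp only [hS, hT, or_self, and_self, if_true,
      card_erase_inter_add_card_erase_union hS hT, le_refl]
  · simp only [hS, hT, true_or, and_false, if_true, if_false, add_zero]
    exact card_le_card (erase_subset_erase i inter_subset_left)
  · simp only [hS, hT, or_true, false_and, if_true, if_false, add_zero, zero_add]
    exact card_le_card (erase_subset_erase i inter_subset_right)
  · simp [hS, hT]

theorem isElemSubmodular_mul_cliqueDegree {C : ℝ} (hC : 0 ≤ C) (i : Fin n) :
    IsElemSubmodular i fun S => C * cliqueDegree i S := by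
  intro S T
  have h : (cliqueDegree i (piMeet (elemSign i) S T) : ℝ) +
      cliqueDegree i (piJoin (elemSign i) S T) ≤ cliqueDegree i S + cliqueDegree i T := by
    exact_mod_cast cliqueDegree_piMeet_add_piJoin_le i S T
  nlinarith [mul_le_mul_of_nonneg_left h hC]

end SignedProducts

theorem isSubmodular_sub_mul {n : ℕ} {f g : Finset (Fin n) → ℝ} {C : ℝ} (hC : 0 ≤ C)
    (hf : ∀ S T, f (S ∩ T) + f (S ∪ T) ≤ f S + f T + C)
    (hg : ∀ S T, ¬S ⊆ T → ¬T ⊆ S → g S + g T + 1 ≤ g (S ∩ T) + g (S ∪ T)) :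
    IsSubmodular fun S => f S - C * g S := by
  intro S T
  by_cases hST : S ⊆ T
  · rw [inter_eq_left.2 hST, union_eq_right.2 hST]
  by_cases hTS : T ⊆ S
  · rw [inter_eq_right.2 hTS, union_eq_left.2 hTS, add_comm]
  nlinarith [hf S T, mul_le_mul_of_nonneg_left (hg S T hST hTS) hC]

theorem statement5 (n : ℕ) (hn : 0 < n) (f : Finset (Fin n) → ℝ) :
    ∃ F : Fin n → Finset (Fin n) → ℝ,
      IsSubmodular (F ⟨0, hn⟩) ∧
      (∀ i : Fin n, i ≠ ⟨0, hn⟩ → IsElemSubmodular i (F i)) ∧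
      f = ∑ i, F i := by
  set i₀ : Fin n := ⟨0, hn⟩
  set C : ℝ := 4 * ∑ S, |f S|
  have hC : 0 ≤ C := by positivity
  set g : Finset (Fin n) → ℝ := fun S => ∑ i ∈ univ.erase i₀, (cliqueDegree i S : ℝ)
  have hg : ∀ S T, ¬S ⊆ T → ¬T ⊆ S → g S + g T + 1 ≤ g (S ∩ T) + g (S ∪ T) := by
    intro S T hST hTS
    simp only [g]
    exact_mod_cast Nat.add_one_le_of_lt (sum_erase_cliqueDegree_add_lt_inter_add_union i₀ hST hTS)
  refine ⟨Function.update (fun i S => C * cliqueDegree i S) i₀ (fun S => f S - C * g S),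
    ?_, fun i hi => ?_, ?_⟩
  · rw [Function.update_self]
    exact isSubmodular_sub_mul hC (fun S T => add_le_add_add_four_mul_sum_abs f _ _ S T) hg
  · rw [Function.update_of_ne hi]
    exact isElemSubmodular_mul_cliqueDegree hC i
  · rw [sum_update_of_mem (mem_univ i₀), sdiff_singleton_eq_erase]
    ext S
    simp only [Pi.add_apply, Finset.sum_apply, g, mul_sum]
    ring
end

section
/- A set function f : 2^{[n]} → ℝ admits a decomposition f = f_0 + f_{i_1} + ⋯ + f_{i_r} with f_0 submodular and each f_{i_j} {i_j}-submodular, for indices i_1,…,i_r, if and only if the restriction f_{A,B} is submodular for B = {i_1,…,i_r} and every A ⊆ B. -/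
/-- The restriction f_{A,B} of a set function: T ↦ f(A ∪ T)
(to be used on subsets T of the complement of B). -/
def restrictSF {n : ℕ} (f : Finset (Fin n) → ℝ) (A : Finset (Fin n)) :
    Finset (Fin n) → ℝ := fun T => f (A ∪ T)

/-- Submodularity of a set function regarded as a function on subsets of
the complement of `B`. -/
def IsSubmodularOn {n : ℕ} (B : Finset (Fin n)) (g : Finset (Fin n) → ℝ) : Prop :=
  ∀ S T : Finset (Fin n), Disjoint S B → Disjoint T B →
    g (S ∩ T) + g (S ∪ T) ≤ g S + g T

/-!
Statement 8: f admits a decomposition f = f₀ + Σ_{i ∈ B} f_i with f₀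
submodular and each f_i {i}-submodular (i ∈ B = {i_1,…,i_r}) iff for every
A ⊆ B the restriction f_{A,B} is submodular on subsets of [n] ∖ B.
-/
lemma piMeet_elem_eq {n : ℕ} {i : Fin n} {X Y : Finset (Fin n)} (h : i ∈ X ↔ i ∈ Y) :
    piMeet (elemSign i) X Y = X ∩ Y := by
  ext m
  by_cases hm : m = i <;> simp [piMeet, elemSign, hm, Finset.mem_inter] <;> tauto

lemma piJoin_elem_eq {n : ℕ} {i : Fin n} {X Y : Finset (Fin n)} (h : i ∈ X ↔ i ∈ Y) :
    piJoin (elemSign i) X Y = X ∪ Y := by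
  ext m
  by_cases hm : m = i <;> simp [piJoin, elemSign, hm, Finset.mem_union] <;> tauto

-- HELPERS
lemma step1 {n : ℕ} (g : Finset (Fin n) → ℝ)
    (H : ∀ i j z, i ≠ j → i ∉ z → j ∉ z →
      g (insert i (insert j z)) + g z ≤ g (insert i z) + g (insert j z))
    (i : Fin n) (S : Finset (Fin n)) (hi : i ∉ S) :
    ∀ D : Finset (Fin n), Disjoint D (insert i S) →
      g (insert i (S ∪ D)) + g S ≤ g (insert i S) + g (S ∪ D) := by
  intro D
  induction D using Finset.induction_on with
  | empty => simp
  | @insert b D hb ih =>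
    intro hdisj
    rw [Finset.disjoint_insert_left] at hdisj
    obtain ⟨hbiS, hD⟩ := hdisj
    simp only [Finset.mem_insert, not_or] at hbiS
    obtain ⟨hbi, hbS⟩ := hbiS
    have hiD : i ∉ D := fun h => (Finset.disjoint_left.mp hD h) (Finset.mem_insert_self i S)
    have key := H i b (S ∪ D) (fun h => hbi h.symm) (by simp [hi, hiD]) (by simp [hbS, hb])
    have ih' := ih hD
    rw [Finset.union_insert]
    linarith

lemma diff_le {n : ℕ} (g : Finset (Fin n) → ℝ)
    (H : ∀ i j z, i ≠ j → i ∉ z → j ∉ z →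
      g (insert i (insert j z)) + g z ≤ g (insert i z) + g (insert j z))
    (i : Fin n) (S T : Finset (Fin n)) (hST : S ⊆ T) (hi : i ∉ T) :
    g (insert i T) + g S ≤ g (insert i S) + g T := by
  have hiS : i ∉ S := fun h => hi (hST h)
  have h1 : S ∪ (T \ S) = T := Finset.union_sdiff_of_subset hST
  have hd : Disjoint (T \ S) (insert i S) := by
    rw [Finset.disjoint_insert_right]
    exact ⟨fun h => hi (Finset.mem_sdiff.mp h).1, Finset.sdiff_disjoint⟩
  have := step1 g H i S hiS (T \ S) hd
  rw [h1] at this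
  exact this

lemma local_submodular {n : ℕ} (g : Finset (Fin n) → ℝ)
    (H : ∀ i j z, i ≠ j → i ∉ z → j ∉ z →
      g (insert i (insert j z)) + g z ≤ g (insert i z) + g (insert j z)) :
    IsSubmodular g := by
  have claim : ∀ D A B : Finset (Fin n), A ⊆ B → Disjoint D B →
      g (B ∪ D) + g A ≤ g (A ∪ D) + g B := by
    intro D
    induction D using Finset.induction_on with
    | empty => intro A B _ _; simp [add_comm]
    | @insert b D hb ih =>
      intro A B hAB hdisj
      rw [Finset.disjoint_insert_left] at hdisj
      obtain ⟨hbB, hD⟩ := hdisj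
      have ih' := ih A B hAB hD
      have hbBD : b ∉ B ∪ D := by simp [hbB, hb]
      have hsub : A ∪ D ⊆ B ∪ D := Finset.union_subset_union_left hAB
      have key := diff_le g H b (A ∪ D) (B ∪ D) hsub hbBD
      rw [Finset.union_insert, Finset.union_insert]
      linarith
  intro S T
  have h1 : (S ∩ T) ∪ (S \ T) = S := by rw [Finset.union_comm]; exact Finset.sdiff_union_inter S T
  have h2 : T ∪ (S \ T) = S ∪ T := by
    rw [Finset.union_sdiff_self_eq_union, Finset.union_comm]
  have := claim (S \ T) (S ∩ T) T Finset.inter_subset_right Finset.sdiff_disjoint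
  rw [h1, h2] at this
  linarith

def flipI {n : ℕ} (i : Fin n) (S : Finset (Fin n)) : Finset (Fin n) :=
  if i ∈ S then S.erase i else insert i S

lemma mem_flipI {n : ℕ} {i j : Fin n} {S : Finset (Fin n)} :
    j ∈ flipI i S ↔ (if j = i then i ∉ S else j ∈ S) := by
  by_cases h : i ∈ S <;> by_cases hj : j = i <;>
    simp [flipI, h, hj, Finset.mem_erase, Finset.mem_insert]

lemma flipI_flipI {n : ℕ} (i : Fin n) (S : Finset (Fin n)) : flipI i (flipI i S) = S := by
  ext j
  by_cases hj : j = i <;> simp [mem_flipI, hj]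

lemma flipI_insert {n : ℕ} {i j : Fin n} (h : j ≠ i) (S : Finset (Fin n)) :
    flipI i (insert j S) = insert j (flipI i S) := by
  ext m
  by_cases hm : m = i <;> simp [mem_flipI, Finset.mem_insert, hm, h, Ne.symm h] <;> tauto

lemma flipI_meet {n : ℕ} (i : Fin n) (S T : Finset (Fin n)) :
    piMeet (elemSign i) S T = flipI i (flipI i S ∩ flipI i T) := by
  ext j
  by_cases hj : j = i <;>
    simp [piMeet, elemSign, mem_flipI, Finset.mem_inter, hj] <;> tauto

lemma flipI_join {n : ℕ} (i : Fin n) (S T : Finset (Fin n)) :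
    piJoin (elemSign i) S T = flipI i (flipI i S ∪ flipI i T) := by
  ext j
  by_cases hj : j = i <;>
    simp [piJoin, elemSign, mem_flipI, Finset.mem_union, hj] <;> tauto

lemma elemSubmodular_of_flip {n : ℕ} (i : Fin n) (g : Finset (Fin n) → ℝ)
    (h : ∀ S T : Finset (Fin n),
      g (flipI i (S ∩ T)) + g (flipI i (S ∪ T)) ≤ g (flipI i S) + g (flipI i T)) :
    IsElemSubmodular i g := by
  intro S T
  have := h (flipI i S) (flipI i T)
  rw [flipI_flipI, flipI_flipI] at this
  rw [flipI_meet, flipI_join]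
  show -g S + -g T ≤ -g (flipI i (flipI i S ∩ flipI i T)) + -g (flipI i (flipI i S ∪ flipI i T))
  linarith

def FiAux {n : ℕ} (M : ℝ) (i : Fin n) (S : Finset (Fin n)) : ℝ :=
  if i ∈ S then M * S.card else 0

lemma card_ins2 {n : ℕ} {j k : Fin n} {z : Finset (Fin n)} (hjk : j ≠ k)
    (hj : j ∉ z) (hk : k ∉ z) :
    ((insert j (insert k z)).card : ℝ) = (z.card : ℝ) + 2 := by
  rw [Finset.card_insert_of_notMem (by simp [hjk, hj]),
    Finset.card_insert_of_notMem hk]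
  push_cast; ring

lemma FiAux_flat {n : ℕ} (M : ℝ) {i j k : Fin n} {z : Finset (Fin n)} (hjk : j ≠ k)
    (hji : j ≠ i) (hki : k ≠ i) (hj : j ∉ z) (hk : k ∉ z) :
    FiAux M i (insert j (insert k z)) + FiAux M i z
      = FiAux M i (insert j z) + FiAux M i (insert k z) := by
  by_cases hi : i ∈ z
  · have h1 : i ∈ insert j (insert k z) := by simp [hi]
    have h2 : i ∈ insert j z := by simp [hi]
    have h3 : i ∈ insert k z := by simp [hi]
    simp only [FiAux, if_pos hi, if_pos h1, if_pos h2, if_pos h3]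
    rw [card_ins2 hjk hj hk, Finset.card_insert_of_notMem hj,
      Finset.card_insert_of_notMem hk]
    push_cast; ring
  · have h1 : i ∉ insert j (insert k z) := by simp [hi, Ne.symm hji, Ne.symm hki]
    have h2 : i ∉ insert j z := by simp [hi, Ne.symm hji]
    have h3 : i ∉ insert k z := by simp [hi, Ne.symm hki]
    simp [FiAux, hi, h1, h2, h3]

lemma FiAux_cross {n : ℕ} (M : ℝ) {i k : Fin n} {z : Finset (Fin n)} (hki : k ≠ i)
    (hi : i ∉ z) (hk : k ∉ z) :
    FiAux M i z + FiAux M i (insert i (insert k z))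
      - FiAux M i (insert i z) - FiAux M i (insert k z) = M := by
  have h1 : i ∉ insert k z := by simp [hi, Ne.symm hki]
  simp only [FiAux, if_neg hi, if_neg h1, if_pos (Finset.mem_insert_self i (insert k z)),
    if_pos (Finset.mem_insert_self i z)]
  rw [card_ins2 (Ne.symm hki) hi hk, Finset.card_insert_of_notMem hi]
  push_cast; ring

lemma FiAux_elem {n : ℕ} {M : ℝ} (hM : 0 ≤ M) (i : Fin n) :
    IsElemSubmodular i (FiAux M i) := by
  apply elemSubmodular_of_flip
  refine local_submodular (fun S => FiAux M i (flipI i S)) ?_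
  intro j k z hjk hj hk
  by_cases hji : j = i
  · subst hji
    have hki : k ≠ j := Ne.symm hjk
    have h1 : flipI j z = insert j z := by simp [flipI, hj]
    have h2 : flipI j (insert j z) = z := by simp [flipI, Finset.erase_insert hj]
    have h3 : flipI j (insert k z) = insert k (insert j z) := by
      rw [flipI_insert hki, h1]
    have h4 : flipI j (insert j (insert k z)) = insert k z := by
      have hjkz : j ∉ insert k z := by simp [hj, hjk]
      simp [flipI, Finset.erase_insert hjkz]
    rw [h1, h2, h3, h4]
    have e1 : FiAux M j (insert k z) = 0 := by
      simp [FiAux, hj, hjk]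
    have e2 : FiAux M j z = 0 := by simp [FiAux, hj]
    have e3 : FiAux M j (insert j z) = M * ((z.card : ℝ) + 1) := by
      simp only [FiAux, if_pos (Finset.mem_insert_self j z),
        Finset.card_insert_of_notMem hj]
      push_cast; ring
    have e4 : FiAux M j (insert k (insert j z)) = M * ((z.card : ℝ) + 2) := by
      have hmem : j ∈ insert k (insert j z) := by simp
      simp only [FiAux, if_pos hmem]
      rw [card_ins2 hki hk hj]
    rw [e1, e2, e3, e4]
    nlinarith [hM]
  · by_cases hki : k = i
    · subst hki
      have h1 : flipI k z = insert k z := by simp [flipI, hk]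
      have h2 : flipI k (insert k z) = z := by simp [flipI, Finset.erase_insert hk]
      have h3 : flipI k (insert j z) = insert j (insert k z) := by
        rw [flipI_insert hjk, h1]
      have h4 : flipI k (insert j (insert k z)) = insert j z := by
        rw [flipI_insert hjk, h2]
      rw [h1, h2, h3, h4]
      have e1 : FiAux M k (insert j z) = 0 := by
        simp [FiAux, hk, Ne.symm hjk]
      have e2 : FiAux M k z = 0 := by simp [FiAux, hk]
      have e3 : FiAux M k (insert k z) = M * ((z.card : ℝ) + 1) := by
        simp only [FiAux, if_pos (Finset.mem_insert_self k z),
          Finset.card_insert_of_notMem hk]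
        push_cast; ring
      have e4 : FiAux M k (insert j (insert k z)) = M * ((z.card : ℝ) + 2) := by
        have hmem : k ∈ insert j (insert k z) := by simp
        simp only [FiAux, if_pos hmem]
        rw [card_ins2 hjk hj hk]
      rw [e1, e2, e3, e4]
      nlinarith [hM]
    · rw [flipI_insert (by exact hji) , flipI_insert (by exact hki),
        flipI_insert (by exact hji)]
      have hj' : j ∉ flipI i z := by
        rw [mem_flipI]; simp [hji, hj]
      have hk' : k ∉ flipI i z := by
        rw [mem_flipI]; simp [hki, hk]
      have := FiAux_flat M hjk (by exact hji) (by exact hki) hj' hk'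
      linarith


theorem statement8 (n : ℕ) (f : Finset (Fin n) → ℝ) (B : Finset (Fin n)) :
    (∃ (f₀ : Finset (Fin n) → ℝ) (F : Fin n → Finset (Fin n) → ℝ),
        IsSubmodular f₀ ∧ (∀ i ∈ B, IsElemSubmodular i (F i)) ∧
        f = f₀ + ∑ i ∈ B, F i) ↔
      ∀ A ⊆ B, IsSubmodularOn B (restrictSF f A) := by
  constructor
  · rintro ⟨f₀, F, hf₀, hF, rfl⟩ A hAB S T hS hT
    simp only [restrictSF, Pi.add_apply, Finset.sum_apply]
    have e1 : A ∪ S ∩ T = (A ∪ S) ∩ (A ∪ T) := Finset.union_inter_distrib_left A S T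
    have e2 : A ∪ (S ∪ T) = (A ∪ S) ∪ (A ∪ T) := Finset.union_union_distrib_left A S T
    have h0 := hf₀ (A ∪ S) (A ∪ T)
    rw [← e1, ← e2] at h0
    have hsum : ∑ i ∈ B, (F i (A ∪ S ∩ T) + F i (A ∪ (S ∪ T)))
        ≤ ∑ i ∈ B, (F i (A ∪ S) + F i (A ∪ T)) := by
      apply Finset.sum_le_sum
      intro i hi
      have hiS : i ∉ S := Finset.disjoint_right.mp hS hi
      have hiT : i ∉ T := Finset.disjoint_right.mp hT hi
      have hiA : i ∈ A ∪ S ↔ i ∈ A ∪ T := by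
        simp [Finset.mem_union, hiS, hiT]
      have key := hF i hi (A ∪ S) (A ∪ T)
      rw [piMeet_elem_eq hiA, piJoin_elem_eq hiA, ← e1, ← e2] at key
      simp only at key
      linarith
    rw [Finset.sum_add_distrib, Finset.sum_add_distrib] at hsum
    linarith
  · intro h
    set N : ℝ := ∑ S : Finset (Fin n), |f S| with hN
    have hNbd : ∀ X : Finset (Fin n), |f X| ≤ N := by
      intro X
      rw [hN]
      exact Finset.single_le_sum (f := fun S => |f S|) (fun _ _ => abs_nonneg _) (Finset.mem_univ X)
    have hN0 : 0 ≤ N := le_trans (abs_nonneg _) (hNbd ∅)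
    set M : ℝ := 4 * N with hM
    have hM0 : 0 ≤ M := by positivity
    refine ⟨fun S => f S - ∑ i ∈ B, FiAux M i S, fun i => FiAux M i,
      ?_, fun i _ => FiAux_elem hM0 i, ?_⟩
    · refine local_submodular _ ?_
      intro j k z hjk hj hk
      have hsplit : ∀ i ∈ B,
          FiAux M i (insert j (insert k z)) + FiAux M i z
            - FiAux M i (insert j z) - FiAux M i (insert k z)
          = if i = j ∨ i = k then M else 0 := by
        intro i hi
        by_cases hij : i = j
        · subst hij
          simp only [true_or, if_pos]
          have := FiAux_cross M (Ne.symm hjk) hj hk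
          linarith
        · by_cases hik : i = k
          · subst hik
            simp only [or_true, if_pos]
            have := FiAux_cross M hjk hk hj
            rw [Finset.insert_comm] at this
            linarith
          · rw [if_neg (by tauto)]
            have := FiAux_flat M hjk (fun hh => hij hh.symm) (fun hh => hik hh.symm) hj hk
            linarith
      have hcomb : ∑ i ∈ B, (FiAux M i (insert j (insert k z)) + FiAux M i z
            - FiAux M i (insert j z) - FiAux M i (insert k z))
          = ∑ i ∈ B, FiAux M i (insert j (insert k z)) + ∑ i ∈ B, FiAux M i z
            - ∑ i ∈ B, FiAux M i (insert j z) - ∑ i ∈ B, FiAux M i (insert k z) := by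
        rw [Finset.sum_sub_distrib, Finset.sum_sub_distrib, Finset.sum_add_distrib]
      by_cases hjkB : j ∉ B ∧ k ∉ B
      · -- the sum of correction terms vanishes; use the hypothesis h
        have hzero : ∑ i ∈ B, (FiAux M i (insert j (insert k z)) + FiAux M i z
              - FiAux M i (insert j z) - FiAux M i (insert k z)) = 0 := by
          apply Finset.sum_eq_zero
          intro i hi
          rw [hsplit i hi, if_neg]
          rintro (rfl | rfl)
          exacts [hjkB.1 hi, hjkB.2 hi]
        have hj' : j ∉ z \ B := fun hm => hj (Finset.mem_sdiff.mp hm).1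
        have hk' : k ∉ z \ B := fun hm => hk (Finset.mem_sdiff.mp hm).1
        have key := h (z ∩ B) Finset.inter_subset_right (insert j (z \ B))
          (insert k (z \ B))
          (Finset.disjoint_insert_left.mpr ⟨hjkB.1, Finset.sdiff_disjoint⟩)
          (Finset.disjoint_insert_left.mpr ⟨hjkB.2, Finset.sdiff_disjoint⟩)
        have einter : insert j (z \ B) ∩ insert k (z \ B) = z \ B := by
          ext a
          simp only [Finset.mem_inter, Finset.mem_insert]
          constructor
          · rintro ⟨h1, h2⟩
            rcases h1 with rfl | h1
            · rcases h2 with rfl | h2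
              · exact absurd rfl hjk
              · exact absurd h2 hj'
            · exact h1
          · intro ha
            exact ⟨Or.inr ha, Or.inr ha⟩
        have eunion : insert j (z \ B) ∪ insert k (z \ B)
            = insert j (insert k (z \ B)) := by
          rw [Finset.insert_union, Finset.union_insert, Finset.union_self]
        rw [einter, eunion] at key
        simp only [restrictSF] at key
        have eq1 : z ∩ B ∪ z \ B = z := by
          ext a
          simp only [Finset.mem_union, Finset.mem_inter, Finset.mem_sdiff]
          tauto
        have eq2 : z ∩ B ∪ insert j (z \ B) = insert j z := by
          ext a
          simp only [Finset.mem_union, Finset.mem_inter, Finset.mem_sdiff,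
            Finset.mem_insert]
          tauto
        have eq3 : z ∩ B ∪ insert k (z \ B) = insert k z := by
          ext a
          simp only [Finset.mem_union, Finset.mem_inter, Finset.mem_sdiff,
            Finset.mem_insert]
          tauto
        have eq4 : z ∩ B ∪ insert j (insert k (z \ B)) = insert j (insert k z) := by
          ext a
          simp only [Finset.mem_union, Finset.mem_inter, Finset.mem_sdiff,
            Finset.mem_insert]
          tauto
        rw [eq1, eq2, eq3, eq4] at key
        linarith [hcomb, hzero, key]
      · -- at least one of j, k lies in B; use the large constant M
        have hbig : M ≤ ∑ i ∈ B, (FiAux M i (insert j (insert k z)) + FiAux M i z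
              - FiAux M i (insert j z) - FiAux M i (insert k z)) := by
          rw [not_and_or, not_not, not_not] at hjkB
          have hnn : ∀ i ∈ B, (0:ℝ) ≤ FiAux M i (insert j (insert k z)) + FiAux M i z
              - FiAux M i (insert j z) - FiAux M i (insert k z) := by
            intro i hi
            rw [hsplit i hi]
            split <;> simp [hM0]
          rcases hjkB with hjB | hkB
          · have := hsplit j hjB
            rw [if_pos (Or.inl rfl)] at this
            calc M = _ := this.symm
              _ ≤ _ := Finset.single_le_sum hnn hjB
          · have := hsplit k hkB
            rw [if_pos (Or.inr rfl)] at this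
            calc M = _ := this.symm
              _ ≤ _ := Finset.single_le_sum hnn hkB
        have b1 := hNbd z
        have b2 := hNbd (insert j (insert k z))
        have b3 := hNbd (insert j z)
        have b4 := hNbd (insert k z)
        rw [abs_le] at b1 b2 b3 b4
        linarith [hcomb]
    · funext S
      simp only [Pi.add_apply, Finset.sum_apply]
      ring
end

section
/- Let A_1, A_2, A_3, A_4 be real matrices with N columns, and define the polyhedral cones P_1 = {v ∈ ℝ^N : A_1 v ≥ 0, A_2 v ≥ 0, A_3 v ≥ 0} and P_2 = {v ∈ ℝ^N : A_1 v ≥ 0, A_2 v ≤ 0, A_4 v ≥ 0}. If the set S = {v ∈ ℝ^N : A_1 v = 0, A_2 v > 0, A_3 v > 0, A_4 v < 0} is non-empty, then the Minkowski sum P_1 + P_2 equals {v ∈ ℝ^N : A_1 v ≥ 0}. -/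
open Pointwise Matrix

/-!
If `w` lies in `S`, then for large `t ≥ 0` the point `v + t • w` is in `P₁` whenever `A₁ v ≥ 0`
(its `A₂`- and `A₃`-values grow linearly in `t` while the `A₁`-values do not move), and `-(t • w)`
is in `P₂`. Hence every such `v = (v + t • w) + (-(t • w))` lies in `P₁ + P₂`; the reverse inclusion
is additivity of `A₁`.
-/

open Filter

lemma eventually_forall_nonneg_add_mul {ι 𝕜 : Type*} [Finite ι] [Field 𝕜] [LinearOrder 𝕜]
    [IsStrictOrderedRing 𝕜] (x y : ι → 𝕜)
    (hy : ∀ i, 0 < y i) : ∀ᶠ t in atTop, ∀ i, 0 ≤ x i + t * y i :=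
  eventually_all.2 fun i =>
    (tendsto_atTop_add_const_left _ (x i) (tendsto_id.atTop_mul_const (hy i))).eventually_ge_atTop 0

theorem statement11 (N m₁ m₂ m₃ m₄ : ℕ)
    (A₁ : Matrix (Fin m₁) (Fin N) ℝ) (A₂ : Matrix (Fin m₂) (Fin N) ℝ)
    (A₃ : Matrix (Fin m₃) (Fin N) ℝ) (A₄ : Matrix (Fin m₄) (Fin N) ℝ)
    (hS : ∃ v : Fin N → ℝ,
      (∀ i, A₁.mulVec v i = 0) ∧ (∀ i, 0 < A₂.mulVec v i) ∧
      (∀ i, 0 < A₃.mulVec v i) ∧ (∀ i, A₄.mulVec v i < 0)) :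
    {v : Fin N → ℝ | (∀ i, 0 ≤ A₁.mulVec v i) ∧ (∀ i, 0 ≤ A₂.mulVec v i) ∧
        (∀ i, 0 ≤ A₃.mulVec v i)} +
      {v : Fin N → ℝ | (∀ i, 0 ≤ A₁.mulVec v i) ∧ (∀ i, A₂.mulVec v i ≤ 0) ∧
        (∀ i, 0 ≤ A₄.mulVec v i)} =
      {v : Fin N → ℝ | ∀ i, 0 ≤ A₁.mulVec v i} := by
  obtain ⟨w, hw₁, hw₂, hw₃, hw₄⟩ := hS
  refine Set.Subset.antisymm ?_ fun v hv => ?_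
  · rintro _ ⟨a, ⟨ha, -, -⟩, b, ⟨hb, -, -⟩, rfl⟩ i
    simpa only [mulVec_add, Pi.add_apply] using add_nonneg (ha i) (hb i)
  obtain ⟨t, ht, ht₂, ht₃⟩ := ((eventually_ge_atTop 0).and
    ((eventually_forall_nonneg_add_mul (A₂ *ᵥ v) _ hw₂).and
      (eventually_forall_nonneg_add_mul (A₃ *ᵥ v) _ hw₃))).exists
  refine ⟨v + t • w, ⟨?_, ?_, ?_⟩, -(t • w), ⟨?_, ?_, ?_⟩, add_neg_cancel_right v _⟩ <;> intro i <;>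
    simp only [mulVec_add, mulVec_neg, mulVec_smul, Pi.add_apply, Pi.neg_apply, Pi.smul_apply,
      smul_eq_mul, hw₁, mul_zero, add_zero, neg_zero, le_refl]
  · exact hv i
  · exact ht₂ i
  · exact ht₃ i
  · exact neg_nonpos.2 (mul_nonneg ht (hw₂ i).le)
  · exact neg_nonneg.2 (mul_nonpos_of_nonneg_of_nonpos ht (hw₄ i).le)
end

section
/- Fix ξ^{(1)}, ξ^{(2)} ∈ {−1,0,1}^{([n] choose 2)}. Then the Minkowski sum L_{ξ^{(1)}} + L_{ξ^{(2)}} equals L_ξ, where ξ_{ij} = ξ^{(1)}_{ij} if ξ^{(1)}_{ij} = ξ^{(2)}_{ij} and ξ_{ij} = 0 otherwise; i.e., the sum is cut out by exactly the inequalities common to both summands. -/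
open Pointwise

/-- The cone L_ξ: all f with ξ_{ij}·A^{(ij)} f ≥ 0 for all i ≠ j (the condition
is vacuous when ξ_{ij} = 0, since then the inequality 0 ≤ 0 always holds). -/
def Lxi {n : ℕ} (ξ : Fin n → Fin n → ℤ) : Set (Finset (Fin n) → ℝ) :=
  {f | ∀ i j : Fin n, i ≠ j → ∀ w : Finset (Fin n), i ∉ w → j ∉ w →
    0 ≤ (ξ i j : ℝ) * imsetExpr f i j w}

/-! The inclusion `L_{ξ¹} + L_{ξ²} ⊆ L_ξ` is termwise. For the converse, write `f ∈ L_ξ` as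
`(f + g) + (-g)` where `g S = ∑_{a,b ∈ S} c a b` is a quadratic function: its elementary imsets
`A^{(ij)} g = c i j + c j i` can be prescribed pair by pair, and choosing them to be
`(ξ¹_{ij} - ξ²_{ij}) M` with `M` a bound for all `|A^{(ij)} f|` makes both summands satisfy
their sign conditions wherever `ξ¹_{ij} ≠ ξ²_{ij}`. -/

def commonSign {n : ℕ} (ξ₁ ξ₂ : Fin n → Fin n → ℤ) : Fin n → Fin n → ℤ :=
  fun i j => if ξ₁ i j = ξ₂ i j then ξ₁ i j else 0

section imsetExpr

variable {n : ℕ}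

lemma imsetExpr_add (f g : Finset (Fin n) → ℝ) (i j : Fin n) (z : Finset (Fin n)) :
    imsetExpr (f + g) i j z = imsetExpr f i j z + imsetExpr g i j z := by
  simp only [imsetExpr, Pi.add_apply]
  ring

lemma imsetExpr_neg (f : Finset (Fin n) → ℝ) (i j : Fin n) (z : Finset (Fin n)) :
    imsetExpr (-f) i j z = -imsetExpr f i j z := by
  simp only [imsetExpr, Pi.neg_apply]
  ring

lemma imsetExpr_sum_sum (c : Fin n → Fin n → ℝ) {i j : Fin n} (hij : i ≠ j)
    {z : Finset (Fin n)} (hi : i ∉ z) (hj : j ∉ z) :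
    imsetExpr (fun S => ∑ a ∈ S, ∑ b ∈ S, c a b) i j z = c i j + c j i := by
  have hi' : i ∉ insert j z := by simp [hij, hi]
  simp only [imsetExpr, Finset.sum_insert hi', Finset.sum_insert hi, Finset.sum_insert hj,
    Finset.sum_add_distrib]
  ring

lemma exists_abs_imsetExpr_le (f : Finset (Fin n) → ℝ) :
    ∃ M, ∀ i j z, |imsetExpr f i j z| ≤ M := by
  obtain ⟨M, hM⟩ := Finite.exists_le fun p : Fin n × Fin n × Finset (Fin n) =>
    |imsetExpr f p.1 p.2.1 p.2.2|
  exact ⟨M, fun i j z => hM (i, j, z)⟩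

end imsetExpr

/-- The decomposition on a single pair `ij`: `e` is `A^{(ij)} f` and `(a - b) M` the shift. -/
lemma signed_shift_nonneg {a b : ℤ} (ha : a = -1 ∨ a = 0 ∨ a = 1) (hb : b = -1 ∨ b = 0 ∨ b = 1)
    {e M : ℝ} (he : |e| ≤ M) (hab : 0 ≤ ((if a = b then a else 0 : ℤ) : ℝ) * e) :
    0 ≤ (a : ℝ) * (e + ((a - b : ℤ) : ℝ) * M) ∧ 0 ≤ (b : ℝ) * -(((a - b : ℤ) : ℝ) * M) := by
  obtain ⟨he₁, he₂⟩ := abs_le.mp he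
  rcases ha with rfl | rfl | rfl <;> rcases hb with rfl | rfl | rfl <;>
    norm_num at hab ⊢ <;> first | linarith | exact ⟨by linarith, by linarith⟩

lemma add_Lxi_subset_Lxi_commonSign {n : ℕ} (ξ₁ ξ₂ : Fin n → Fin n → ℤ) :
    Lxi ξ₁ + Lxi ξ₂ ⊆ Lxi (commonSign ξ₁ ξ₂) := by
  rintro _ ⟨f₁, hf₁, f₂, hf₂, rfl⟩ i j hij w hi hj
  rw [imsetExpr_add, mul_add]
  by_cases h : ξ₁ i j = ξ₂ i j
  · have h₂ := hf₂ i j hij w hi hj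
    rw [← h] at h₂
    simp only [commonSign, if_pos h]
    exact add_nonneg (hf₁ i j hij w hi hj) h₂
  · simp [commonSign, h]

lemma Lxi_commonSign_subset_add {n : ℕ} {ξ₁ ξ₂ : Fin n → Fin n → ℤ}
    (hsym₁ : ∀ i j, ξ₁ i j = ξ₁ j i) (hsym₂ : ∀ i j, ξ₂ i j = ξ₂ j i)
    (hval₁ : ∀ i j, ξ₁ i j = -1 ∨ ξ₁ i j = 0 ∨ ξ₁ i j = 1)
    (hval₂ : ∀ i j, ξ₂ i j = -1 ∨ ξ₂ i j = 0 ∨ ξ₂ i j = 1) :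
    Lxi (commonSign ξ₁ ξ₂) ⊆ Lxi ξ₁ + Lxi ξ₂ := by
  intro f hf
  obtain ⟨M, hM⟩ := exists_abs_imsetExpr_le f
  set g : Finset (Fin n) → ℝ :=
    fun S => ∑ a ∈ S, ∑ b ∈ S, ((ξ₁ a b - ξ₂ a b : ℤ) : ℝ) * M / 2
  have hg : ∀ i j, i ≠ j → ∀ w, i ∉ w → j ∉ w →
      imsetExpr g i j w = ((ξ₁ i j - ξ₂ i j : ℤ) : ℝ) * M := by
    intro i j hij w hi hj
    rw [imsetExpr_sum_sum _ hij hi hj, ← hsym₁ i j, ← hsym₂ i j]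
    ring
  have hshift := fun i j hij w hi hj =>
    signed_shift_nonneg (hval₁ i j) (hval₂ i j) (hM i j w) (hf i j hij w hi hj)
  refine ⟨f + g, ?_, -g, ?_, add_neg_cancel_right f g⟩
  · intro i j hij w hi hj
    rw [imsetExpr_add, hg i j hij w hi hj]
    exact (hshift i j hij w hi hj).1
  · intro i j hij w hi hj
    rw [imsetExpr_neg, hg i j hij w hi hj]
    exact (hshift i j hij w hi hj).2

theorem statement13 (n : ℕ) (ξ₁ ξ₂ : Fin n → Fin n → ℤ)
    (hsym₁ : ∀ i j, ξ₁ i j = ξ₁ j i) (hsym₂ : ∀ i j, ξ₂ i j = ξ₂ j i)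
    (hval₁ : ∀ i j, ξ₁ i j = -1 ∨ ξ₁ i j = 0 ∨ ξ₁ i j = 1)
    (hval₂ : ∀ i j, ξ₂ i j = -1 ∨ ξ₂ i j = 0 ∨ ξ₂ i j = 1) :
    Lxi ξ₁ + Lxi ξ₂ = Lxi (fun i j => if ξ₁ i j = ξ₂ i j then ξ₁ i j else 0) :=
  (add_Lxi_subset_Lxi_commonSign ξ₁ ξ₂).antisymm
    (Lxi_commonSign_subset_add hsym₁ hsym₂ hval₁ hval₂)
end

section
/- For n ≥ 2, the relative volume of the supermodular cone L_{(1,…,1)} ⊆ ℝ^({0,1}^n) ≅ ℝ^{2^n} (the cone of functions f : {0,1}^n → ℝ satisfying all elementary imset inequalities A^{(ij)} f ≥ 0) satisfies Vol(L_{(1,…,1)}) ≤ 2^{−2^{n−2}}/(n−1), and this is at most 0.85^{2^n}. -/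
open MeasureTheory Metric

variable {ι : Type*} [Fintype ι]

local notation "⟪" x ", " y "⟫" => @inner ℝ _ _ x y

lemma hs_meas (s : List (EuclideanSpace ℝ ι)) :
    MeasurableSet {f : EuclideanSpace ℝ ι | ∀ v ∈ s, 0 ≤ ⟪v, f⟫} := by
  have : {f : EuclideanSpace ℝ ι | ∀ v ∈ s, 0 ≤ ⟪v, f⟫}
      = ⋂ v ∈ {v | v ∈ s}, {f | 0 ≤ ⟪v, f⟫} := by ext f; simp
  rw [this]
  refine MeasurableSet.biInter s.finite_toSet.countable (fun v _ => ?_)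
  exact (isClosed_le continuous_const (Continuous.inner continuous_const continuous_id)).measurableSet

lemma halfspace_vol (l : List (EuclideanSpace ℝ ι))
    (hne : ∀ u ∈ l, u ≠ 0)
    (horth : l.Pairwise (fun u v => ⟪u, v⟫ = 0)) :
    volume ({f : EuclideanSpace ℝ ι | ∀ u ∈ l, 0 ≤ ⟪u, f⟫} ∩ closedBall 0 1)
      ≤ (1/2 : ENNReal) ^ l.length * volume (closedBall (0 : EuclideanSpace ℝ ι) 1) := by
  induction l with
  | nil => simp
  | cons u t ih =>
    have hu : u ≠ 0 := hne u List.mem_cons_self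
    have hut : ∀ v ∈ t, ⟪u, v⟫ = 0 := (List.pairwise_cons.1 horth).1
    have iht := ih (fun v hv => hne v (List.mem_cons_of_mem _ hv)) (List.pairwise_cons.1 horth).2
    set B := closedBall (0 : EuclideanSpace ℝ ι) 1 with hB
    set P : Set (EuclideanSpace ℝ ι) := {f | ∀ v ∈ t, 0 ≤ ⟪v, f⟫} ∩ B with hP
    set Q : Set (EuclideanSpace ℝ ι) := {f | ∀ v ∈ u :: t, 0 ≤ ⟪v, f⟫} ∩ B with hQ
    have hQP : Q ⊆ P := by
      intro f hf
      exact ⟨fun v hv => hf.1 v (List.mem_cons_of_mem _ hv), hf.2⟩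
    have hQu : ∀ f ∈ Q, 0 ≤ ⟪u, f⟫ := fun f hf => hf.1 u List.mem_cons_self
    -- the reflection
    set K : Submodule ℝ (EuclideanSpace ℝ ι) := (ℝ ∙ u)ᗮ with hK
    set R : EuclideanSpace ℝ ι ≃ₗᵢ[ℝ] EuclideanSpace ℝ ι := Submodule.reflection K with hR
    have hRu : R u = -u := by
      apply Submodule.reflection_mem_subspace_orthogonalComplement_eq_neg
      exact (Submodule.le_orthogonal_orthogonal _) (Submodule.mem_span_singleton_self u)
    have hRinner_u : ∀ f, ⟪u, R f⟫ = -⟪u, f⟫ := by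
      intro f
      have := R.inner_map_map u f
      rw [hRu] at this
      rw [inner_neg_left] at this
      linarith
    have hRinner_v : ∀ v ∈ t, ∀ f, ⟪v, R f⟫ = ⟪v, f⟫ := by
      intro v hv f
      have hvK : v ∈ K := Submodule.mem_orthogonal_singleton_iff_inner_right.2 (hut v hv)
      have := R.inner_map_map v f
      rwa [Submodule.reflection_mem_subspace_eq_self hvK] at this
    have hRQ : R '' Q ⊆ P ∩ {f | ⟪u, f⟫ ≤ 0} := by
      rintro _ ⟨f, hf, rfl⟩
      refine ⟨⟨fun v hv => ?_, ?_⟩, ?_⟩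
      · rw [hRinner_v v hv f]; exact hf.1 v (List.mem_cons_of_mem _ hv)
      · have : ‖R f‖ = ‖f‖ := R.norm_map f
        rw [hB, mem_closedBall_zero_iff, this, ← mem_closedBall_zero_iff]
        exact hf.2
      · simp only [Set.mem_setOf_eq, hRinner_u f]
        linarith [hQu f hf]
    have hQmeas : MeasurableSet Q := (hs_meas _).inter measurableSet_closedBall
    have hRQmeas : MeasurableSet (R '' Q) := by
      rw [LinearIsometryEquiv.image_eq_preimage_symm]
      exact hQmeas.preimage R.symm.continuous.measurable
    have hvolRQ : volume (R '' Q) = volume Q := by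
      rw [LinearIsometryEquiv.image_eq_preimage_symm]
      exact (R.symm.measurePreserving).measure_preimage hQmeas.nullMeasurableSet
    have hnull : volume (Q ∩ R '' Q) = 0 := by
      have hsub : Q ∩ R '' Q ⊆ (K : Set (EuclideanSpace ℝ ι)) := by
        rintro f ⟨hf1, hf2⟩
        have h1 : 0 ≤ ⟪u, f⟫ := hQu f hf1
        have h2 : ⟪u, f⟫ ≤ 0 := (hRQ hf2).2
        exact Submodule.mem_orthogonal_singleton_iff_inner_right.2 (le_antisymm h2 h1)
      refine measure_mono_null hsub ?_
      apply Measure.addHaar_submodule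
      intro hKtop
      apply hu
      have : u ∈ K := hKtop ▸ Submodule.mem_top
      have := Submodule.mem_orthogonal_singleton_iff_inner_right.1 this
      rwa [inner_self_eq_zero] at this
    have key : 2 * volume Q ≤ volume P := by
      have : volume Q + volume (R '' Q) = volume (Q ∪ R '' Q) + volume (Q ∩ R '' Q) :=
        (measure_union_add_inter Q hRQmeas).symm
      rw [hvolRQ, hnull, add_zero] at this
      calc 2 * volume Q = volume Q + volume Q := two_mul _
        _ = volume (Q ∪ R '' Q) := this
        _ ≤ volume P := measure_mono (Set.union_subset hQP (fun f hf => (hRQ hf).1))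
    calc volume Q ≤ (1/2) * volume P := by
          rw [ENNReal.mul_comm_div, one_mul, ENNReal.le_div_iff_mul_le (by norm_num) (by norm_num)]
          rw [mul_comm]; exact key
      _ ≤ (1/2) * ((1/2 : ENNReal) ^ t.length * volume B) := by
          exact mul_le_mul_right iht _
      _ = (1/2 : ENNReal) ^ (u :: t).length * volume B := by
          rw [List.length_cons, pow_succ]; ring


open Finset

variable {n : ℕ}

noncomputable def vec (a c : Fin n) (z : Finset (Fin n)) : EuclideanSpace ℝ (Finset (Fin n)) :=
  EuclideanSpace.single (insert a (insert c z)) 1 + EuclideanSpace.single z 1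
  - EuclideanSpace.single (insert a z) 1 - EuclideanSpace.single (insert c z) 1

noncomputable def chi (a c : Fin n) : EuclideanSpace ℝ (Finset (Fin n)) :=
  WithLp.toLp 2 (fun S : Finset (Fin n) => if (a ∈ S ↔ c ∈ S) then (1:ℝ) else -1)

lemma vec_inner (a c : Fin n) (z : Finset (Fin n)) (f : EuclideanSpace ℝ (Finset (Fin n))) :
    ⟪vec a c z, f⟫ = f (insert a (insert c z)) + f z - f (insert a z) - f (insert c z) := by
  simp [vec, inner_add_left, inner_sub_left, EuclideanSpace.inner_single_left]

lemma vec_apply (a c : Fin n) (z S : Finset (Fin n)) :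
    vec a c z S = (if S = insert a (insert c z) then (1:ℝ) else 0)
      + (if S = z then 1 else 0) - (if S = insert a z then 1 else 0)
      - (if S = insert c z then 1 else 0) := by
  simp [vec, EuclideanSpace.single_apply]

lemma vec_inner_nonneg {a c : Fin n} (hac : a ≠ c) {z : Finset (Fin n)} (ha : a ∉ z) (hc : c ∉ z)
    {f : EuclideanSpace ℝ (Finset (Fin n))}
    (hf : ∀ S T : Finset (Fin n), f S + f T ≤ f (S ∩ T) + f (S ∪ T)) :
    0 ≤ ⟪vec a c z, f⟫ := by
  rw [vec_inner]
  have h1 : (insert a z) ∩ (insert c z) = z := by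
    ext x; simp only [mem_inter, mem_insert]; constructor
    · rintro ⟨h | h, h' | h'⟩ <;> first | assumption | (subst h; subst h'; exact absurd rfl hac) |
        (exfalso; subst h; exact hc (by assumption)) | (exfalso; subst h'; exact ha (by assumption))
    · intro h; exact ⟨Or.inr h, Or.inr h⟩
  have h2 : (insert a z) ∪ (insert c z) = insert a (insert c z) := by
    ext x; simp only [mem_union, mem_insert]; tauto
  have := hf (insert a z) (insert c z)
  rw [h1, h2] at this
  linarith

lemma vec_support {a c : Fin n} (hac : a ≠ c) {z : Finset (Fin n)} (ha : a ∉ z) (hc : c ∉ z)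
    {S : Finset (Fin n)} (h : vec a c z S ≠ 0) : S \ {a, c} = z := by
  rw [vec_apply] at h
  by_contra hne
  apply h
  have e1 : S ≠ insert a (insert c z) := by
    rintro rfl; apply hne; ext x; simp only [mem_sdiff, mem_insert, mem_singleton]; constructor
    · rintro ⟨h1 | h1 | h1, h2⟩ <;> tauto
    · intro hx; exact ⟨by tauto, by rintro (rfl | rfl) <;> tauto⟩
  have e2 : S ≠ z := by
    rintro rfl; apply hne; ext x; simp only [mem_sdiff, mem_insert, mem_singleton]
    constructor
    · tauto
    · intro hx; exact ⟨hx, by rintro (rfl | rfl) <;> tauto⟩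
  have e3 : S ≠ insert a z := by
    rintro rfl; apply hne; ext x; simp only [mem_sdiff, mem_insert, mem_singleton]; constructor
    · rintro ⟨h1 | h1, h2⟩ <;> tauto
    · intro hx; exact ⟨Or.inr hx, by rintro (rfl | rfl) <;> tauto⟩
  have e4 : S ≠ insert c z := by
    rintro rfl; apply hne; ext x; simp only [mem_sdiff, mem_insert, mem_singleton]; constructor
    · rintro ⟨h1 | h1, h2⟩ <;> tauto
    · intro hx; exact ⟨Or.inr hx, by rintro (rfl | rfl) <;> tauto⟩
  simp [e1, e2, e3, e4]

lemma vec_ne_zero {a c : Fin n} (hac : a ≠ c) {z : Finset (Fin n)} (ha : a ∉ z) (hc : c ∉ z) :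
    vec a c z ≠ 0 := by
  intro h
  have : vec a c z z = 0 := by rw [h]; rfl
  rw [vec_apply] at this
  have e1 : z ≠ insert a (insert c z) := fun h => ha (h ▸ mem_insert_self a _)
  have e3 : z ≠ insert a z := fun h => ha (h ▸ mem_insert_self a _)
  have e4 : z ≠ insert c z := fun h => hc (h ▸ mem_insert_self c _)
  simp [e1, e3, e4] at this

lemma chi_ne_zero (a c : Fin n) : chi a c ≠ 0 := by
  intro h
  have : chi a c ∅ = 0 := by rw [h]; rfl
  simp [chi] at this

lemma vec_orth {a c : Fin n} (hac : a ≠ c) {z z' : Finset (Fin n)} (ha : a ∉ z) (hc : c ∉ z)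
    (ha' : a ∉ z') (hc' : c ∉ z') (hzz : z ≠ z') : ⟪vec a c z, vec a c z'⟫ = 0 := by
  rw [PiLp.inner_apply]
  refine Finset.sum_eq_zero fun S _ => ?_
  by_cases h1 : vec a c z S = 0
  · simp [h1]
  by_cases h2 : vec a c z' S = 0
  · simp [h2]
  exact absurd ((vec_support hac ha hc h1).symm.trans (vec_support hac ha' hc' h2)) hzz

lemma chi_apply (a c : Fin n) (S : Finset (Fin n)) :
    chi a c S = if (a ∈ S ↔ c ∈ S) then (1:ℝ) else -1 := rfl

lemma vec_chi_orth {a b j : Fin n} (hab : a ≠ b) (haj : a ≠ j) (hbj : b ≠ j)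
    {z : Finset (Fin n)} (ha : a ∉ z) (hb : b ∉ z) : ⟪vec a b z, chi a j⟫ = 0 := by
  rw [vec_inner]
  by_cases hjz : j ∈ z <;>
    simp [chi_apply, mem_insert, hjz, haj.symm, hbj.symm, ha, hb, hab.symm] <;> ring_nf <;>
    simp [haj, hab]

lemma chi_chi_orth {a j j' : Fin n} (hj : j ≠ j') (hja : j ≠ a) (hj'a : j' ≠ a) :
    ⟪chi a j, chi a j'⟫ = 0 := by
  rw [PiLp.inner_apply]
  refine Finset.sum_ninvolution (fun S => if j ∈ S then S.erase j else insert j S) ?_ ?_ ?_ ?_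
  · intro S
    by_cases h1 : j ∈ S <;> by_cases h2 : j' ∈ S <;> by_cases h3 : a ∈ S <;>
      simp [chi_apply, h1, h2, h3, mem_erase, mem_insert, hj, hj.symm, hja, hj'a, Ne.symm hja] <;>
      ring
  · intro S _
    by_cases h1 : j ∈ S <;> simp [h1, Finset.erase_ne_self, Finset.insert_ne_self]
  · intro S; exact mem_univ _
  · intro S
    by_cases h1 : j ∈ S <;> simp [h1, Finset.erase_insert, Finset.insert_erase]

lemma pilp_sum_apply {κ : Type*} (s : Finset κ) (g : κ → EuclideanSpace ℝ (Finset (Fin n)))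
    (i : Finset (Fin n)) : (∑ k ∈ s, g k) i = ∑ k ∈ s, g k i := by
  classical
  induction s using Finset.cons_induction with
  | empty => simp [PiLp.zero_apply]
  | cons a s ha ih => rw [Finset.sum_cons, Finset.sum_cons, PiLp.add_apply, ih]

lemma chi_eq_sum {a c : Fin n} (hac : a ≠ c) :
    chi a c = ∑ z ∈ (univ \ {a, c} : Finset (Fin n)).powerset, vec a c z := by
  ext S
  have hsum : (∑ z ∈ (univ \ {a, c} : Finset (Fin n)).powerset, vec a c z) S
      = ∑ z ∈ (univ \ {a, c} : Finset (Fin n)).powerset, vec a c z S :=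
    pilp_sum_apply _ _ _
  rw [hsum, Finset.sum_eq_single (S \ {a, c})]
  · by_cases ha : a ∈ S <;> by_cases hc : c ∈ S
    · have hS1 : S = insert a (insert c (S \ {a, c})) := by
        ext x; simp only [mem_insert, mem_sdiff, mem_singleton]; constructor
        · intro hx; by_cases h1 : x = a; · tauto
          by_cases h2 : x = c; · tauto
          exact Or.inr (Or.inr ⟨hx, by tauto⟩)
        · rintro (rfl | rfl | ⟨h, _⟩) <;> assumption
      have hS2 : S ≠ S \ {a, c} := by
        intro h; have : a ∈ S \ {a, c} := h ▸ ha; simp at this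
      have hS3 : S ≠ insert a (S \ {a, c}) := by
        intro h; have : c ∈ insert a (S \ {a, c}) := h ▸ hc
        simp [Ne.symm hac, hac] at this
      have hS4 : S ≠ insert c (S \ {a, c}) := by
        intro h; have : a ∈ insert c (S \ {a, c}) := h ▸ ha
        simp [hac] at this
      rw [vec_apply, if_pos hS1, if_neg hS2, if_neg hS3, if_neg hS4]
      simp [chi_apply, ha, hc]
    · have hS1 : S = insert a (S \ {a, c}) := by
        ext x; simp only [mem_insert, mem_sdiff, mem_singleton]; constructor
        · intro hx; by_cases h1 : x = a; · tauto
          exact Or.inr ⟨hx, by rintro (rfl | rfl) <;> tauto⟩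
        · rintro (rfl | ⟨h, _⟩) <;> assumption
      have hS2 : S ≠ insert a (insert c (S \ {a, c})) := by
        intro h; apply hc; rw [h]; simp
      have hS3 : S ≠ S \ {a, c} := by
        intro h; have : a ∈ S \ {a, c} := h ▸ ha; simp at this
      have hS4 : S ≠ insert c (S \ {a, c}) := by
        intro h; have : c ∈ S := h ▸ mem_insert_self c _; exact hc this
      rw [vec_apply, if_neg hS2, if_neg hS3, if_pos hS1, if_neg hS4]
      simp [chi_apply, ha, hc]
    · have hS1 : S = insert c (S \ {a, c}) := by
        ext x; simp only [mem_insert, mem_sdiff, mem_singleton]; constructor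
        · intro hx; by_cases h1 : x = c; · tauto
          exact Or.inr ⟨hx, by rintro (rfl | rfl) <;> tauto⟩
        · rintro (rfl | ⟨h, _⟩) <;> assumption
      have hS2 : S ≠ insert a (insert c (S \ {a, c})) := by
        intro h; have : a ∈ S := h ▸ mem_insert_self a _; exact ha this
      have hS3 : S ≠ S \ {a, c} := by
        intro h; have : c ∈ S \ {a, c} := h ▸ hc; simp at this
      have hS4 : S ≠ insert a (S \ {a, c}) := by
        intro h; have : a ∈ S := h ▸ mem_insert_self a _; exact ha this
      rw [vec_apply, if_neg hS2, if_neg hS3, if_neg hS4, if_pos hS1]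
      simp [chi_apply, ha, hc]
    · have hS1 : S = S \ {a, c} := by
        ext x; simp only [mem_sdiff, mem_insert, mem_singleton]; constructor
        · intro hx; exact ⟨hx, by rintro (rfl | rfl) <;> tauto⟩
        · tauto
      have hS2 : S ≠ insert a (insert c (S \ {a, c})) := by
        intro h; have : a ∈ S := h ▸ mem_insert_self a _; exact ha this
      have hS3 : S ≠ insert a (S \ {a, c}) := by
        intro h; have : a ∈ S := h ▸ mem_insert_self a _; exact ha this
      have hS4 : S ≠ insert c (S \ {a, c}) := by
        intro h; have : c ∈ S := h ▸ mem_insert_self c _; exact hc this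
      rw [vec_apply, if_neg hS2, if_pos hS1, if_neg hS3, if_neg hS4]
      simp [chi_apply, ha, hc]
  · intro z hz hne
    by_contra h
    have hz' := Finset.mem_powerset.1 hz
    have ha : a ∉ z := fun hmem => by
      have := hz' hmem; simp at this
    have hc : c ∉ z := fun hmem => by
      have := hz' hmem; simp at this
    exact hne ((vec_support hac ha hc h).symm)
  · intro h
    exact absurd (Finset.mem_powerset.2 (sdiff_subset_sdiff (subset_univ S) (Finset.Subset.refl _))) h

lemma chi_inner_nonneg {a c : Fin n} (hac : a ≠ c) {f : EuclideanSpace ℝ (Finset (Fin n))}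
    (hf : ∀ S T : Finset (Fin n), f S + f T ≤ f (S ∩ T) + f (S ∪ T)) :
    0 ≤ ⟪chi a c, f⟫ := by
  rw [chi_eq_sum hac, sum_inner]
  refine Finset.sum_nonneg fun z hz => ?_
  have hz' := Finset.mem_powerset.1 hz
  have ha : a ∉ z := fun hmem => by have := hz' hmem; simp at this
  have hc : c ∉ z := fun hmem => by have := hz' hmem; simp at this
  exact vec_inner_nonneg hac ha hc hf


/-!
Statement 14: for n ≥ 2, the relative volume (w.r.t. the Euclidean unit ball)
of the supermodular cone in ℝ^({0,1}^n) ≅ ℝ^{2^n} is at most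
2^{−2^{n−2}}/(n−1), which in turn is at most 0.85^{2^n}.
We realize ℝ^({0,1}^n) as `EuclideanSpace ℝ (Finset (Fin n))` and the cone
as the set of functions satisfying all supermodularity inequalities
f(S) + f(T) ≤ f(S∩T) + f(S∪T) (equivalently, all elementary imset
inequalities A^{(ij)} f ≥ 0).
-/
theorem statement14 (n : ℕ) (hn : 2 ≤ n) :
    (volume (({f : EuclideanSpace ℝ (Finset (Fin n)) |
          ∀ S T : Finset (Fin n), f S + f T ≤ f (S ∩ T) + f (S ∪ T)}) ∩
        Metric.closedBall 0 1)).toReal /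
      (volume (Metric.closedBall (0 : EuclideanSpace ℝ (Finset (Fin n))) 1)).toReal ≤
        ((1 : ℝ) / 2) ^ (2 ^ (n - 2)) / ((n : ℝ) - 1) ∧
    ((1 : ℝ) / 2) ^ (2 ^ (n - 2)) / ((n : ℝ) - 1) ≤ (0.85 : ℝ) ^ (2 ^ n) := by
  constructor
  · classical
    set a : Fin n := ⟨0, by omega⟩ with ha_def
    set b : Fin n := ⟨1, by omega⟩ with hb_def
    have hab : a ≠ b := by simp [ha_def, hb_def, Fin.ext_iff]
    set P : Finset (Finset (Fin n)) := (univ \ {a, b}).powerset with hP_def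
    set J : Finset (Fin n) := univ \ {a, b} with hJ_def
    -- membership facts
    have hPz : ∀ z ∈ P, a ∉ z ∧ b ∉ z := by
      intro z hz
      have hz' := Finset.mem_powerset.1 hz
      constructor <;> intro hmem <;> have := hz' hmem <;> simp at this
    have hJj : ∀ j ∈ J, j ≠ a ∧ j ≠ b := by
      intro j hj; rw [hJ_def] at hj; simp at hj; tauto
    set L : List (EuclideanSpace ℝ (Finset (Fin n))) :=
      (P.toList.map (vec a b)) ++ (J.toList.map (chi a)) with hL_def
    have hlen : L.length = 2 ^ (n - 2) + (n - 2) := by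
      have hJcard : J.card = n - 2 := by
        rw [hJ_def, Finset.card_sdiff_of_subset (subset_univ _), Finset.card_univ, Fintype.card_fin]
        rw [Finset.card_pair hab]
      rw [hL_def, List.length_append, List.length_map, List.length_map,
        Finset.length_toList, Finset.length_toList, hP_def, Finset.card_powerset, hJcard]
    have hne : ∀ u ∈ L, u ≠ 0 := by
      intro u hu
      rw [hL_def, List.mem_append] at hu
      rcases hu with hu | hu
      · obtain ⟨z, hz, rfl⟩ := List.mem_map.1 hu
        rw [Finset.mem_toList] at hz
        exact vec_ne_zero hab (hPz z hz).1 (hPz z hz).2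
      · obtain ⟨j, hj, rfl⟩ := List.mem_map.1 hu
        exact chi_ne_zero a j
    have horth : L.Pairwise (fun u v => ⟪u, v⟫ = 0) := by
      rw [hL_def, List.pairwise_append]
      refine ⟨?_, ?_, ?_⟩
      · rw [List.pairwise_map]
        refine (Finset.nodup_toList P).pairwise_of_forall_ne fun z hz z' hz' hne => ?_
        rw [Finset.mem_toList] at hz hz'
        exact vec_orth hab (hPz z hz).1 (hPz z hz).2 (hPz z' hz').1 (hPz z' hz').2 hne
      · rw [List.pairwise_map]
        refine (Finset.nodup_toList J).pairwise_of_forall_ne fun j hj j' hj' hne => ?_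
        rw [Finset.mem_toList] at hj hj'
        exact chi_chi_orth hne (hJj j hj).1 (hJj j' hj').1
      · intro x hx y hy
        obtain ⟨z, hz, rfl⟩ := List.mem_map.1 hx
        obtain ⟨j, hj, rfl⟩ := List.mem_map.1 hy
        rw [Finset.mem_toList] at hz hj
        exact vec_chi_orth hab (Ne.symm (hJj j hj).1) (Ne.symm (hJj j hj).2)
          (hPz z hz).1 (hPz z hz).2
    have hvol := halfspace_vol L hne horth
    set C : Set (EuclideanSpace ℝ (Finset (Fin n))) :=
      {f | ∀ S T : Finset (Fin n), f S + f T ≤ f (S ∩ T) + f (S ∪ T)} with hC_def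
    set B := Metric.closedBall (0 : EuclideanSpace ℝ (Finset (Fin n))) 1 with hB_def
    have hsub : C ∩ B ⊆ {f : EuclideanSpace ℝ (Finset (Fin n)) | ∀ u ∈ L, 0 ≤ ⟪u, f⟫} ∩ B := by
      rintro f ⟨hf, hfB⟩
      refine ⟨?_, hfB⟩
      intro u hu
      rw [hL_def, List.mem_append] at hu
      rcases hu with hu | hu
      · obtain ⟨z, hz, rfl⟩ := List.mem_map.1 hu
        rw [Finset.mem_toList] at hz
        exact vec_inner_nonneg hab (hPz z hz).1 (hPz z hz).2 hf
      · obtain ⟨j, hj, rfl⟩ := List.mem_map.1 hu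
        rw [Finset.mem_toList] at hj
        exact chi_inner_nonneg (Ne.symm (hJj j hj).1) hf
    have hCB : volume (C ∩ B) ≤ (1/2 : ENNReal) ^ L.length * volume B :=
      le_trans (measure_mono hsub) hvol
    -- ball measure facts
    have hB0 : volume B ≠ 0 := (measure_closedBall_pos volume _ one_pos).ne'
    have hBtop : volume B ≠ ⊤ := measure_closedBall_lt_top.ne
    -- convert to reals
    have htoReal : (volume (C ∩ B)).toReal ≤ (1/2 : ℝ) ^ L.length * (volume B).toReal := by
      have h2 : ((1/2 : ENNReal) ^ L.length * volume B).toReal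
          = (1/2 : ℝ) ^ L.length * (volume B).toReal := by
        rw [ENNReal.toReal_mul, ENNReal.toReal_pow]
        norm_num
      exact h2 ▸ ENNReal.toReal_mono (by
        exact ENNReal.mul_ne_top (ENNReal.pow_ne_top (by norm_num)) hBtop) hCB
    have hBpos : 0 < (volume B).toReal := ENNReal.toReal_pos hB0 hBtop
    rw [div_le_iff₀ hBpos]
    refine le_trans htoReal ?_
    refine mul_le_mul_of_nonneg_right ?_ (le_of_lt hBpos)
    -- numeric: (1/2)^(2^(n-2)+(n-2)) ≤ (1/2)^(2^(n-2))/(n-1)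
    rw [hlen, pow_add]
    have hn1 : (0:ℝ) < (n:ℝ) - 1 := by
      have : (2:ℝ) ≤ (n:ℝ) := by exact_mod_cast hn
      linarith
    have hkey : ((n:ℝ) - 1) ≤ 2 ^ (n-2) := by
      have h1 : n - 1 ≤ 2 ^ (n - 2) := by
        have := Nat.lt_two_pow_self (n := n - 2)
        omega
      have h2 : ((n - 1 : ℕ) : ℝ) = (n:ℝ) - 1 := by
        have : 1 ≤ n := by omega
        push_cast [this]; ring
      calc ((n:ℝ) - 1) = ((n - 1 : ℕ) : ℝ) := h2.symm
        _ ≤ ((2 ^ (n-2) : ℕ) : ℝ) := by exact_mod_cast h1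
        _ = 2 ^ (n-2) := by push_cast; ring
    have : ((1:ℝ)/2) ^ (n - 2) ≤ 1 / ((n:ℝ) - 1) := by
      rw [div_pow, one_pow]
      rw [div_le_div_iff₀ (by positivity) hn1]
      calc 1 * ((n:ℝ) - 1) = (n:ℝ) - 1 := by ring
        _ ≤ 2 ^ (n-2) := hkey
        _ = 1 * 2 ^ (n-2) := by ring
    calc ((1:ℝ)/2) ^ 2 ^ (n-2) * ((1:ℝ)/2) ^ (n-2)
        ≤ ((1:ℝ)/2) ^ 2 ^ (n-2) * (1 / ((n:ℝ) - 1)) := by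
          refine mul_le_mul_of_nonneg_left this (by positivity)
      _ = ((1:ℝ)/2) ^ 2 ^ (n-2) / ((n:ℝ) - 1) := by ring
  · have hn1 : (1:ℝ) ≤ (n:ℝ) - 1 := by
      have : (2:ℝ) ≤ (n:ℝ) := by exact_mod_cast hn
      linarith
    have h1 : ((1 : ℝ) / 2) ^ (2 ^ (n - 2)) / ((n : ℝ) - 1) ≤ ((1 : ℝ) / 2) ^ (2 ^ (n - 2)) :=
      div_le_self (by positivity) hn1
    refine le_trans h1 ?_
    have hexp : 2 ^ n = 4 * 2 ^ (n - 2) := by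
      have h : n = 2 + (n - 2) := by omega
      conv_lhs => rw [h]
      rw [pow_add]; norm_num
    rw [hexp, pow_mul]
    exact pow_le_pow_left₀ (by norm_num : (0:ℝ) ≤ 1/2) (by norm_num : (1:ℝ)/2 ≤ 0.85 ^ 4) _
end
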